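/- arXiv:1305.3498 — 12 statements merged into one kernel-verified Lean document; each statement's English description precedes it below -/
import Mathlib

section
/- Let t ≥ 1 and k = 2t, and suppose Φ_1, …, Φ_{2t} and S_1, …, S_{2t} satisfy the (r = 2) subspace conditions. For p, q in {1,…,t} let Π_{p,q} denote the composition applying Φ_{2p−1} first and then Φ_{2q} (the paper's product Φ_{2p−1}Φ_{2q}). If for some p₀, q₀ in {1,…,t} the map Π_{p₀,q₀} lies in the F-linear span of the other t² − 1 maps {Π_{p,q} : (p,q) ≠ (p₀,q₀)}, then S_{2p₀−1} ∩ S_{2q₀} = {0}; in other words, S_{2p₀−1} and S_{2q₀} are complementary subspaces of dimension ℓ/2. -/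
/-!
Let `i = 2p₀ − 1`, `j = 2q₀`, `v ∈ S_i ∩ S_j` and `D = S_i ∩ S_j`. Every other product
`Φ_b ∘ Φ_a` sends `v` into `S_j + Φ_j(D)`: if `b ≠ j` both factors preserve `S_j`, and if `b = j`
then `a ≠ i`, so `Φ_a v ∈ D`. By linearity so does `Φ_j ∘ Φ_i`. Writing `Φ_j Φ_i v = s + Φ_j d`,
the vector `Φ_i v − d ∈ S_j` is sent by `Φ_j` into `S_j`, so it vanishes because
`Φ_j(S_j) ∩ S_j = 0`; then `Φ_i v = d ∈ S_i`, and `Φ_i(S_i) ∩ S_i = 0` forces `v = 0`.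
-/

open Function

namespace Submodule

variable {R V : Type*} [Ring R] [AddCommGroup V] [Module R V]
  {f : V →ₗ[R] V} {S T : Submodule R V} {w : V}

theorem eq_zero_of_mem_of_apply_mem (hf : Injective f) (hS : S.map f ⊓ S = ⊥)
    (hw : w ∈ S) (hfw : f w ∈ S) : w = 0 := by
  have hfw0 : f w ∈ S.map f ⊓ S := mem_inf.mpr ⟨mem_map_of_mem hw, hfw⟩
  rw [hS, mem_bot] at hfw0
  exact hf (hfw0.trans f.map_zero.symm)

theorem mem_of_apply_mem_sup_map (hf : Injective f) (hS : S.map f ⊓ S = ⊥) (hTS : T ≤ S)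
    (hw : w ∈ S) (hfw : f w ∈ S ⊔ T.map f) : w ∈ T := by
  obtain ⟨s, hs, _, ⟨d, hd, rfl⟩, hsum⟩ := mem_sup.mp hfw
  have hf_sub : f (w - d) = s := by rw [map_sub, ← hsum, add_sub_cancel_right]
  have hwd : w - d = 0 :=
    eq_zero_of_mem_of_apply_mem hf hS (S.sub_mem hw (hTS hd)) (hf_sub ▸ hs)
  rwa [sub_eq_zero.mp hwd]

end Submodule

theorem LinearMap.apply_mem_of_mem_span {R V : Type*} [CommRing R] [AddCommGroup V]
    [Module R V] {A : Set (Module.End R V)} {g : Module.End R V} (hg : g ∈ Submodule.span R A)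
    {v : V} {U : Submodule R V} (hA : ∀ f ∈ A, f v ∈ U) : g v ∈ U :=
  (Submodule.span_le (p := U.comap (LinearMap.applyₗ v))).mpr hA hg

section SubspaceConditions

variable {R V ι P Q : Type*} [CommRing R] [AddCommGroup V] [Module R V]
  {Φ : ι → V ≃ₗ[R] V} {S : ι → Submodule R V}

theorem comp_apply_mem_sup_map (hinv : ∀ i j, i ≠ j → (S i).map (Φ j : V →ₗ[R] V) ≤ S i)
    {a : P → ι} {b : Q → ι} (hab : ∀ p q, a p ≠ b q) (ha : Injective a) (hb : Injective b)
    {p₀ p : P} {q₀ q : Q} (hpq : (p, q) ≠ (p₀, q₀)) {v : V} (hv : v ∈ S (a p₀) ⊓ S (b q₀)) :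
    ((Φ (b q) : V →ₗ[R] V) ∘ₗ (Φ (a p) : V →ₗ[R] V)) v ∈
      S (b q₀) ⊔ (S (a p₀) ⊓ S (b q₀)).map (Φ (b q₀) : V →ₗ[R] V) := by
  have hmaps : ∀ {i j : ι}, i ≠ j → ∀ {x : V}, x ∈ S i → Φ j x ∈ S i :=
    fun hij _ hx => hinv _ _ hij (Submodule.mem_map_of_mem hx)
  obtain ⟨hvi, hvj⟩ := Submodule.mem_inf.mp hv
  have hav : Φ (a p) v ∈ S (b q₀) := hmaps (hab p q₀).symm hvj
  by_cases hq : q = q₀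
  · subst hq
    have hp : a p₀ ≠ a p := ha.ne fun h => hpq (by rw [h])
    exact Submodule.mem_sup_right
      (Submodule.mem_map_of_mem (Submodule.mem_inf.mpr ⟨hmaps hp hvi, hav⟩))
  · exact Submodule.mem_sup_left (hmaps (hb.ne (Ne.symm hq)) hav)

theorem inf_eq_bot_of_comp_mem_span
    (hinv : ∀ i j, i ≠ j → (S i).map (Φ j : V →ₗ[R] V) ≤ S i)
    {a : P → ι} {b : Q → ι} (hab : ∀ p q, a p ≠ b q)
    (ha : Injective a) (hb : Injective b)
    (hdisj : ∀ i, (S i).map (Φ i : V →ₗ[R] V) ⊓ S i = ⊥) (p₀ : P) (q₀ : Q)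
    (hspan : (Φ (b q₀) : V →ₗ[R] V) ∘ₗ (Φ (a p₀) : V →ₗ[R] V) ∈ Submodule.span R
      ((fun pq : P × Q => (Φ (b pq.2) : V →ₗ[R] V) ∘ₗ (Φ (a pq.1) : V →ₗ[R] V)) ''
        {pq | pq ≠ (p₀, q₀)})) :
    S (a p₀) ⊓ S (b q₀) = ⊥ := by
  refine (Submodule.eq_bot_iff _).mpr fun v hv => ?_
  obtain ⟨hvi, hvj⟩ := Submodule.mem_inf.mp hv
  have hprod := LinearMap.apply_mem_of_mem_span hspan (v := v) <| by
    rintro _ ⟨⟨p, q⟩, hpq, rfl⟩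
    exact comp_apply_mem_sup_map hinv hab ha hb hpq hv
  have hΦv : Φ (a p₀) v ∈ S (b q₀) := hinv _ _ (hab p₀ q₀).symm (Submodule.mem_map_of_mem hvj)
  have hΦvD := Submodule.mem_of_apply_mem_sup_map (Φ (b q₀)).injective (hdisj (b q₀))
    inf_le_right hΦv hprod
  exact Submodule.eq_zero_of_mem_of_apply_mem (Φ (a p₀)).injective (hdisj (a p₀)) hvi
    (Submodule.mem_inf.mp hΦvD).1

end SubspaceConditions

theorem stmt1 (F : Type*) [Field F] (V : Type*) [AddCommGroup V] [Module F V]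
    (t : ℕ)
    (Φ : Fin (2 * t) → V ≃ₗ[F] V) (S : Fin (2 * t) → Submodule F V)
    (h1 : ∀ i j : Fin (2 * t), i ≠ j → (S i).map (Φ j : V →ₗ[F] V) = S i)
    (h2 : ∀ i : Fin (2 * t), (S i).map (Φ i : V →ₗ[F] V) ⊓ S i = ⊥)
    (Pi : Fin t → Fin t → Module.End F V)
    (hPi : ∀ p q : Fin t, Pi p q =
      ((Φ ⟨2 * q.val + 1, by omega⟩ : V →ₗ[F] V)) ∘ₗ ((Φ ⟨2 * p.val, by omega⟩ : V →ₗ[F] V)))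
    (p₀ q₀ : Fin t)
    (hspan : Pi p₀ q₀ ∈ Submodule.span F
      ((fun pq : Fin t × Fin t => Pi pq.1 pq.2) '' {pq | pq ≠ (p₀, q₀)})) :
    S ⟨2 * p₀.val, by omega⟩ ⊓ S ⟨2 * q₀.val + 1, by omega⟩ = ⊥ := by
  obtain rfl : Pi = _ := funext₂ hPi
  refine inf_eq_bot_of_comp_mem_span (fun i j hij => (h1 i j hij).le)
    (a := fun p : Fin t => ⟨2 * p.val, by omega⟩) (b := fun q : Fin t => ⟨2 * q.val + 1, by omega⟩)
    ?_ ?_ ?_ h2 p₀ q₀ hspan <;> intro x y h <;> simp only [Fin.ext_iff] at h ⊢ <;> omega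
end

section
/- Suppose Φ_1, …, Φ_k and S_1, …, S_k satisfy the (r = 2) subspace conditions, let n be an integer with 2n ≤ k, and assume S_{2j−1} ∩ S_{2j} = {0} for each j in {1,…,n}. For ε = (ε_1,…,ε_n) ∈ {0,1}^n let Υ_ε be the composition, taken over j = 1,…,n in increasing order (j = 1 applied first), of the maps (Φ_{2j−1} followed by Φ_{2j}) for those j with ε_j = 1 (so Υ_{(0,…,0)} = id_V); this is the paper's ordered product ∏_{j=1}^n (Φ_{2j−1}Φ_{2j})^{ε_j}. Then the 2^n endomorphisms {Υ_ε : ε ∈ {0,1}^n} are linearly independent over F. -/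
/-!
Induct on `n`. Write `P = S_{2n-1}`, `Q = S_{2n}` (so `V = P ⊕ Q` by counting dimensions) and
`Ψ = Φ_{2n-1}Φ_{2n}`. Every product not involving the last pair preserves `P` and `Q`, and if
both `B` and `Ψ ∘ B` preserve `P` and `Q` then `B = 0`: for `v ∈ Q`, `Ψ (B v)` lies in
`Φ_{2n}(Q) ∩ Q = 0`, and for `v ∈ P`, `Φ_{2n-1}(B v)` lies in `Φ_{2n-1}(P) ∩ P = 0`. Hence a
relation `A + Ψ ∘ B = 0` with `A`, `B` in the span of the shorter products forces `A = B = 0`.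
-/

open Module

namespace Submodule

variable {R M : Type*} [CommSemiring R] [AddCommMonoid M] [Module R M]

def invtEnd (p : Submodule R M) : Subalgebra R (Module.End R M) where
  carrier := {f | ∀ x ∈ p, f x ∈ p}
  mul_mem' hf hg x hx := hf _ (hg x hx)
  add_mem' hf hg x hx := p.add_mem (hf x hx) (hg x hx)
  algebraMap_mem' c _ hx := p.smul_mem c hx

theorem mem_invtEnd_of_map_eq {p : Submodule R M} {f : Module.End R M} (h : p.map f = p) :
    f ∈ p.invtEnd :=
  fun _ hx => h ▸ mem_map_of_mem hx

variable {p : Submodule R M} {e : M ≃ₗ[R] M} {x : M}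

theorem mem_of_apply_mem_of_map_eq (he : p.map (e : M →ₗ[R] M) = p) (hx : e x ∈ p) : x ∈ p := by
  rw [← he] at hx
  obtain ⟨y, hy, hyx⟩ := hx
  rwa [← e.injective hyx]

theorem eq_zero_of_apply_mem_of_map_inf_eq_bot (he : p.map (e : M →ₗ[R] M) ⊓ p = ⊥)
    (hx : x ∈ p) (hex : e x ∈ p) : x = 0 := by
  have h : e x ∈ p.map (e : M →ₗ[R] M) ⊓ p := ⟨mem_map_of_mem hx, hex⟩
  rw [he, mem_bot] at h
  exact e.map_eq_zero_iff.mp h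

theorem eq_zero_of_mem_invtEnd_of_comp_mul_mem {P Q : Submodule R M} (hPQ : P ⊔ Q = ⊤)
    {φ ψ : M ≃ₗ[R] M} (hφQ : Q.map (φ : M →ₗ[R] M) = Q) (hψP : P.map (ψ : M →ₗ[R] M) = P)
    (hφP : P.map (φ : M →ₗ[R] M) ⊓ P = ⊥) (hψQ : Q.map (ψ : M →ₗ[R] M) ⊓ Q = ⊥)
    {b : Module.End R M} (hb : b ∈ P.invtEnd ⊓ Q.invtEnd)
    (hψφb : ((ψ : M →ₗ[R] M) ∘ₗ (φ : M →ₗ[R] M)) * b ∈ P.invtEnd ⊓ Q.invtEnd) : b = 0 := by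
  have hP : ∀ x ∈ P, b x = 0 := fun x hx =>
    eq_zero_of_apply_mem_of_map_inf_eq_bot hφP (hb.1 x hx)
      (mem_of_apply_mem_of_map_eq hψP (hψφb.1 x hx))
  have hQ : ∀ x ∈ Q, b x = 0 := fun x hx =>
    φ.map_eq_zero_iff.mp <| eq_zero_of_apply_mem_of_map_inf_eq_bot hψQ
      (mem_invtEnd_of_map_eq hφQ _ (hb.2 x hx)) (hψφb.2 x hx)
  ext x
  obtain ⟨p, hp, q, hq, rfl⟩ := mem_sup.mp (hPQ ▸ mem_top : x ∈ P ⊔ Q)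
  simp [hP p hp, hQ q hq]

end Submodule

section OrderedSubProd

variable {A : Type*} [Monoid A]

def orderedSubProd {n : ℕ} (a : Fin n → A) (ε : Fin n → Bool) : A :=
  (List.ofFn fun j => if ε j then a j else 1).reverse.prod

@[simp]
theorem orderedSubProd_zero (a : Fin 0 → A) (ε : Fin 0 → Bool) : orderedSubProd a ε = 1 := by
  simp [orderedSubProd]

theorem orderedSubProd_snoc {n : ℕ} (a : Fin (n + 1) → A) (ε : Fin n → Bool) (b : Bool) :
    orderedSubProd a (Fin.snoc ε b) =
      (if b then a (Fin.last n) else 1) * orderedSubProd (Fin.init a) ε := by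
  simp only [orderedSubProd, List.ofFn_succ', List.concat_eq_append, List.reverse_append,
    List.reverse_singleton, List.singleton_append, List.prod_cons, Fin.snoc_last,
    Fin.snoc_castSucc, Fin.init]

theorem orderedSubProd_mem {S : Type*} [SetLike S A] [SubmonoidClass S A] {s : S} {n : ℕ}
    {a : Fin n → A} (ha : ∀ j, a j ∈ s) (ε : Fin n → Bool) : orderedSubProd a ε ∈ s := by
  refine list_prod_mem fun x hx => ?_
  obtain ⟨j, rfl⟩ := List.mem_ofFn.mp (List.mem_reverse.mp hx)
  split_ifs
  exacts [ha j, one_mem s]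

end OrderedSubProd

section LinearIndependence

variable {R A : Type*} [CommRing R] [Ring A] [Algebra R A]

theorem linearIndependent_sumElim_mul {E : Submodule R A} {t : A}
    (ht : ∀ b ∈ E, t * b ∈ E → b = 0) {ι : Type*} {f : ι → A} (hf : LinearIndependent R f)
    (hfE : ∀ i, f i ∈ E) : LinearIndependent R (Sum.elim f fun i => t * f i) := by
  have hspan : Submodule.span R (Set.range f) ≤ E :=
    Submodule.span_le.mpr (Set.range_subset_iff.mpr hfE)
  have hker : Disjoint (Submodule.span R (Set.range f)) (LinearMap.ker (LinearMap.mulLeft R t)) :=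
    Submodule.disjoint_def.mpr fun b hb htb =>
      ht b (hspan hb) (by rw [show t * b = 0 from htb]; exact E.zero_mem)
  refine hf.sum_type (hf.map hker) (Submodule.disjoint_def.mpr fun x hx htx => ?_)
  rw [show (Set.range fun i => t * f i) = LinearMap.mulLeft R t '' Set.range f from
    Set.range_comp _ _, Submodule.span_image] at htx
  obtain ⟨b, hb, rfl⟩ := htx
  rw [ht b (hspan hb) (hspan hx), LinearMap.map_zero]

end LinearIndependence

theorem linearIndependent_orderedSubProd {K A : Type*} [Field K] [Ring A] [Nontrivial A]
    [Algebra K A] {n : ℕ} (a : Fin n → A) (E : Fin n → Subalgebra K A)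
    (hmem : ∀ i j, i < j → a i ∈ E j)
    (hsep : ∀ j, ∀ b ∈ E j, a j * b ∈ E j → b = 0) :
    LinearIndependent K (orderedSubProd a) := by
  induction n with
  | zero =>
    exact LinearIndependent.of_subsingleton default (by simp)
  | succ n ih =>
    have hinit := ih (Fin.init a) (Fin.init E) (fun i j hij => hmem _ _ (by simpa using hij))
      fun j => hsep j.castSucc
    have hstep := linearIndependent_sumElim_mul (E := (E (Fin.last n)).toSubmodule)
      (hsep (Fin.last n)) hinit
      (orderedSubProd_mem (s := E (Fin.last n)) fun j => hmem _ _ (Fin.castSucc_lt_last j))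
    let e := (Fin.snocEquiv fun _ : Fin (n + 1) => Bool).symm.trans
      (Equiv.boolProdEquivSum (Fin n → Bool))
    refine (linearIndependent_equiv' e ?_).mpr hstep
    funext ε
    rw [← Fin.snoc_init_self ε, orderedSubProd_snoc]
    cases ε (Fin.last n) <;> simp [e, Fin.snocEquiv, Equiv.boolProdEquivSum]

/-- Under the (r = 2) subspace conditions, if `2n ≤ k` and
`S_{2j−1} ∩ S_{2j} = {0}` for `j = 1,…,n`, then the `2ⁿ` ordered products
`Υ_ε = ∏_{j=1}^n (Φ_{2j−1}Φ_{2j})^{ε_j}` (the factor for `j = 1` applied first,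
`Υ_{(0,…,0)} = id`) are linearly independent. -/
theorem stmt3 (F : Type*) [Field F] (V : Type*) [AddCommGroup V] [Module F V]
    [FiniteDimensional F V] (ℓ : ℕ) (hℓeven : Even ℓ) (hℓpos : 0 < ℓ)
    (hdim : Module.finrank F V = ℓ)
    (k : ℕ) (Φ : Fin k → V ≃ₗ[F] V) (S : Fin k → Submodule F V)
    (hSdim : ∀ i, Module.finrank F (S i) = ℓ / 2)
    (h1 : ∀ i j : Fin k, i ≠ j → (S i).map (Φ j : V →ₗ[F] V) = S i)
    (h2 : ∀ i : Fin k, (S i).map (Φ i : V →ₗ[F] V) ⊓ S i = ⊥)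
    (n : ℕ) (hn : 2 * n ≤ k)
    (hdisj : ∀ j : Fin n,
      S ⟨2 * j.val, by omega⟩ ⊓ S ⟨2 * j.val + 1, by omega⟩ = ⊥)
    (Υ : (Fin n → Bool) → Module.End F V)
    (hΥ : ∀ ε : Fin n → Bool, Υ ε =
      (List.ofFn (fun j : Fin n =>
        if ε j then
          ((Φ ⟨2 * j.val + 1, by omega⟩ : V →ₗ[F] V)) ∘ₗ
            ((Φ ⟨2 * j.val, by omega⟩ : V →ₗ[F] V))
        else (1 : Module.End F V))).reverse.prod) :
    LinearIndependent F Υ := by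
  let P (j : Fin n) : Fin k := ⟨2 * j.val, by omega⟩
  let Q (j : Fin n) : Fin k := ⟨2 * j.val + 1, by omega⟩
  have : Nontrivial V := finrank_pos_iff.mp (hdim ▸ hℓpos)
  have hsup (j : Fin n) : S (P j) ⊔ S (Q j) = ⊤ := by
    refine Submodule.eq_top_of_disjoint _ _ ?_ (disjoint_iff.mpr (hdisj j))
    rw [hdim, hSdim, hSdim]
    obtain ⟨m, rfl⟩ := hℓeven
    omega
  have hinvt (i : Fin k) (j : Fin n) (hij : i.val < 2 * j.val) :
      (Φ i : Module.End F V) ∈ (S (P j)).invtEnd ⊓ (S (Q j)).invtEnd :=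
    ⟨Submodule.mem_invtEnd_of_map_eq (h1 _ _ (Fin.ne_of_val_ne (by dsimp only [P]; omega))),
      Submodule.mem_invtEnd_of_map_eq (h1 _ _ (Fin.ne_of_val_ne (by dsimp only [Q]; omega)))⟩
  rw [show Υ = orderedSubProd fun j => (Φ (Q j) : Module.End F V) * Φ (P j) from funext hΥ]
  exact linearIndependent_orderedSubProd _ (fun j => (S (P j)).invtEnd ⊓ (S (Q j)).invtEnd)
    (fun i j hij =>
      mul_mem (hinvt _ _ (by dsimp only [Q]; omega)) (hinvt _ _ (by dsimp only [P]; omega)))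
    fun j _ hb hab => Submodule.eq_zero_of_mem_invtEnd_of_comp_mul_mem (hsup j)
      (h1 _ _ (Fin.ne_of_val_ne (by dsimp only [P, Q]; omega)))
      (h1 _ _ (Fin.ne_of_val_ne (by dsimp only [P, Q]; omega))) (h2 _) (h2 _) hb hab
end

section
/- Let ℓ ≥ 2 be an even integer and V an ℓ-dimensional vector space over a field F. If there exist invertible linear endomorphisms Φ_1, …, Φ_k of V and subspaces S_1, …, S_k of V satisfying the (r = 2) subspace conditions, then k ≤ max(4ℓ, 8·log₂ℓ), where log₂ denotes the real base-2 logarithm. -/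
/-!
Let `C_I ⊆ End V` be the space of endomorphisms preserving every `S_j`, `j ∈ I`. For `i ∉ I` the
map `Φ_i` preserves each such `S_j`, so `C_I` is stable under left and right multiplication by
`Φ_i`, and since `V = S_i ⊕ Φ_i(S_i)` this forces `dim C_{I ∪ {i}} ≤ (3/4) dim C_I`. As `C_I`
always contains the identity, `(4/3)^k ≤ dim End V = ℓ²`, and `(4/3)^4 ≥ 2` gives `2^k ≤ ℓ^8`.
-/

open Module

namespace Submodule

theorem mem_compatibleMaps {R M N : Type*} [CommSemiring R] [AddCommMonoid M] [Module R M]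
    [AddCommMonoid N] [Module R N] {p : Submodule R M} {q : Submodule R N} {f : M →ₗ[R] N} :
    f ∈ compatibleMaps p q ↔ p ≤ q.comap f :=
  Iff.rfl

theorem mul_mem_compatibleMaps {R M : Type*} [CommSemiring R] [AddCommMonoid M] [Module R M]
    {p : Submodule R M} {f g : Module.End R M} (hf : f ∈ compatibleMaps p p)
    (hg : g ∈ compatibleMaps p p) : f * g ∈ compatibleMaps p p :=
  fun _ hx => hf (hg hx)

section RankNullity

variable {F E E' : Type*} [Field F] [AddCommGroup E] [Module F E] [AddCommGroup E'] [Module F E']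
  [FiniteDimensional F E]

theorem finrank_map_add_finrank_inf_ker (f : E →ₗ[F] E') (p : Submodule F E) :
    finrank F (p.map f) + finrank F ↥(p ⊓ LinearMap.ker f) = finrank F p := by
  have h := LinearMap.finrank_range_add_finrank_ker (f.domRestrict p)
  rwa [LinearMap.range_domRestrict, LinearMap.ker_domRestrict, ← finrank_map_subtype_eq,
    map_comap_subtype] at h

theorem finrank_add_finrank_le_of_map_le [FiniteDimensional F E']
    (ψ : E →ₗ[F] E') {A B : Submodule F E'} {C : Submodule F E} (hBA : B ≤ A)
    (hCA : C.map ψ ≤ A) :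
    finrank F C + finrank F B ≤ finrank F A + finrank F ↥(C ⊓ B.comap ψ) := by
  have hker : LinearMap.ker (B.mkQ ∘ₗ ψ) = B.comap ψ := by
    rw [LinearMap.ker_comp, ker_mkQ]
  have hC := finrank_map_add_finrank_inf_ker (B.mkQ ∘ₗ ψ) C
  have hA := finrank_map_add_finrank_inf_ker B.mkQ A
  rw [ker_mkQ, inf_eq_right.mpr hBA] at hA
  rw [hker, map_comp] at hC
  have := finrank_mono (map_mono (f := B.mkQ) hCA)
  omega

end RankNullity

section Stabilizers

variable {F V : Type*} [Field F] [AddCommGroup V] [Module F V] {φ : V ≃ₗ[F] V}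
  {S : Submodule F V} {f : Module.End F V}

theorem mem_compatibleMaps_bot_of_mul_mem (hS : Disjoint S (S.map (φ : Module.End F V)))
    (hf : f ∈ compatibleMaps S S) (hφf : (φ : Module.End F V) * f ∈ compatibleMaps S S) :
    f ∈ compatibleMaps S ⊥ := by
  intro x hx
  have hφfx : φ (f x) ∈ S ⊓ S.map (φ : Module.End F V) :=
    ⟨hφf hx, mem_map_of_mem (hf hx)⟩
  rw [hS.eq_bot, mem_bot, LinearEquiv.map_eq_zero_iff] at hφfx
  exact hφfx

theorem mem_compatibleMaps_top_of_mul_mem {g : Module.End F V} (hS : S ⊔ S.map g = ⊤)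
    (hf : f ∈ compatibleMaps S S) (hfg : f * g ∈ compatibleMaps S S) :
    f ∈ compatibleMaps ⊤ S := by
  rw [mem_compatibleMaps, ← hS]
  exact sup_le hf (map_le_iff_le_comap.mpr hfg)

theorem eq_zero_of_mul_mul_mem (hS : IsCompl S (S.map (φ : Module.End F V)))
    (hker : f ∈ compatibleMaps S ⊥) (hrange : f ∈ compatibleMaps ⊤ S)
    (hφfφ : (φ : Module.End F V) * f * φ ∈ compatibleMaps S S) : f = 0 := by
  have hfφ : f * (φ : Module.End F V) ∈ compatibleMaps S S := fun _ _ => hrange trivial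
  have hφS := mem_compatibleMaps_bot_of_mul_mem hS.disjoint hfφ (by rwa [← mul_assoc])
  rw [← LinearMap.ker_eq_top, ← comap_bot, eq_top_iff, ← hS.sup_eq_top]
  exact sup_le hker (map_le_iff_le_comap.mpr hφS)

variable [FiniteDimensional F V]

/-- With `B = A ⊓ compatibleMaps S S`, the maps `f ↦ φ f` and `f ↦ f φ` from `B` to `A / B` have
kernels inside the maps killing `S` and the maps into `S` respectively, and on the intersection of
these two spaces `f ↦ φ f φ` is injective modulo `B`. -/
theorem four_mul_finrank_inf_compatibleMaps_le (hS : IsCompl S (S.map (φ : Module.End F V)))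
    {A : Submodule F (Module.End F V)} (hAφ : ∀ f ∈ A, (φ : Module.End F V) * f ∈ A)
    (hφA : ∀ f ∈ A, f * (φ : Module.End F V) ∈ A) :
    4 * finrank F ↥(A ⊓ compatibleMaps S S) ≤ 3 * finrank F A := by
  set B := A ⊓ compatibleMaps S S
  set N := A ⊓ compatibleMaps S ⊥
  set M := A ⊓ compatibleMaps ⊤ S
  have hBA : B ≤ A := inf_le_left
  have hNB : N ≤ B := inf_le_inf_left A fun _ hf => hf.trans (comap_mono bot_le)
  have hMB : M ≤ B := inf_le_inf_left A fun _ hf => le_top.trans (mem_compatibleMaps.mp hf)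
  have hleft := finrank_add_finrank_le_of_map_le (C := B)
    (LinearMap.mulLeft F (φ : Module.End F V)) hBA
    (map_le_iff_le_comap.mpr fun f hf => hAφ f hf.1)
  have hright := finrank_add_finrank_le_of_map_le (C := B)
    (LinearMap.mulRight F (φ : Module.End F V)) hBA
    (map_le_iff_le_comap.mpr fun f hf => hφA f hf.1)
  have hboth := finrank_add_finrank_le_of_map_le (C := N ⊓ M)
    (LinearMap.mulLeftRight F ((φ : Module.End F V), (φ : Module.End F V))) hBA
    (map_le_iff_le_comap.mpr fun f hf => hφA _ (hAφ f hf.1.1))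
  have hleftN : B ⊓ B.comap (LinearMap.mulLeft F (φ : Module.End F V)) ≤ N :=
    fun f ⟨hfB, hφfB⟩ => ⟨hfB.1, mem_compatibleMaps_bot_of_mul_mem hS.disjoint hfB.2 hφfB.2⟩
  have hrightM : B ⊓ B.comap (LinearMap.mulRight F (φ : Module.End F V)) ≤ M :=
    fun f ⟨hfB, hfφB⟩ => ⟨hfB.1, mem_compatibleMaps_top_of_mul_mem hS.sup_eq_top hfB.2 hfφB.2⟩
  have hbothBot : N ⊓ M ⊓
      B.comap (LinearMap.mulLeftRight F ((φ : Module.End F V), (φ : Module.End F V))) = ⊥ :=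
    eq_bot_iff.mpr fun f ⟨⟨hfN, hfM⟩, hφfφB⟩ => (mem_bot F).mpr
      (eq_zero_of_mul_mul_mem hS hfN.2 hfM.2 hφfφB.2)
  have hNM := finrank_sup_add_finrank_inf_eq N M
  have := finrank_mono (sup_le hNB hMB)
  have := finrank_mono hleftN
  have := finrank_mono hrightM
  rw [hbothBot, finrank_bot] at hboth
  linarith

theorem pow_mul_finrank_iInf_compatibleMaps_le {ι : Type*} {Φ : ι → V ≃ₗ[F] V}
    {S : ι → Submodule F V} (hΦS : ∀ i j, i ≠ j → (S i).map (Φ j : Module.End F V) = S i)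
    (hS : ∀ i, IsCompl (S i) ((S i).map (Φ i : Module.End F V))) (I : Finset ι) :
    4 ^ I.card * finrank F ↥(⨅ i ∈ I, compatibleMaps (S i) (S i)) ≤
      3 ^ I.card * finrank F (Module.End F V) := by
  classical
  induction I using Finset.induction_on with
  | empty => simpa using finrank_le _
  | insert i I hi ih =>
    have hΦ : ∀ j ∈ I, (Φ i : Module.End F V) ∈ compatibleMaps (S j) (S j) := fun j hj =>
      map_le_iff_le_comap.mp (hΦS j i (ne_of_mem_of_not_mem hj hi)).le
    have hstep := four_mul_finrank_inf_compatibleMaps_le (hS i)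
      (A := ⨅ j ∈ I, compatibleMaps (S j) (S j))
      (fun f hf => by
        simp only [mem_iInf] at hf ⊢
        exact fun j hj => mul_mem_compatibleMaps (hΦ j hj) (hf j hj))
      (fun f hf => by
        simp only [mem_iInf] at hf ⊢
        exact fun j hj => mul_mem_compatibleMaps (hf j hj) (hΦ j hj))
    rw [Finset.iInf_insert, inf_comm, Finset.card_insert_of_notMem hi, pow_succ, pow_succ]
    calc 4 ^ I.card * 4 * _ = 4 ^ I.card * (4 * _) := by ring
      _ ≤ 4 ^ I.card * (3 * _) := Nat.mul_le_mul_left _ hstep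
      _ = 3 * (4 ^ I.card * _) := by ring
      _ ≤ 3 * (3 ^ I.card * _) := Nat.mul_le_mul_left _ ih
      _ = _ := by ring

theorem finrank_iInf_compatibleMaps_pos [Nontrivial V] {ι : Type*} (S : ι → Submodule F V)
    (I : Finset ι) : 0 < finrank F ↥(⨅ i ∈ I, compatibleMaps (S i) (S i)) := by
  have hone : (1 : Module.End F V) ∈ ⨅ i ∈ I, compatibleMaps (S i) (S i) := by
    simp only [mem_iInf]
    exact fun i _ x hx => hx
  exact finrank_pos_iff_exists_ne_zero.mpr ⟨⟨1, hone⟩, by simp⟩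

end Stabilizers

end Submodule

theorem two_pow_le_pow_four_of_four_pow_le {k n : ℕ} (h : 4 ^ k ≤ 3 ^ k * n) : 2 ^ k ≤ n ^ 4 := by
  refine Nat.le_of_mul_le_mul_right ?_ (pow_pos (by norm_num : 0 < 81) k)
  calc 2 ^ k * 81 ^ k = 162 ^ k := by rw [← mul_pow]; norm_num
    _ ≤ 256 ^ k := Nat.pow_le_pow_left (by norm_num) k
    _ = (4 ^ k) ^ 4 := by rw [← pow_mul, mul_comm, pow_mul]; norm_num
    _ ≤ (3 ^ k * n) ^ 4 := Nat.pow_le_pow_left h 4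
    _ = n ^ 4 * 81 ^ k := by rw [mul_pow, ← pow_mul, mul_comm k 4, pow_mul]; ring

/-- If there exist invertible endomorphisms `Φ₁, …, Φ_k` of an
`ℓ`-dimensional vector space (`ℓ ≥ 2` even) and subspaces `S₁, …, S_k` of dimension
`ℓ/2` satisfying the (r = 2) subspace conditions, then `k ≤ max (4ℓ, 8·log₂ ℓ)`. -/
theorem stmt4 (F : Type*) [Field F] (V : Type*) [AddCommGroup V] [Module F V]
    [FiniteDimensional F V] (ℓ : ℕ) (hℓ2 : 2 ≤ ℓ) (hℓeven : Even ℓ)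
    (hdim : Module.finrank F V = ℓ)
    (k : ℕ) (Φ : Fin k → V ≃ₗ[F] V) (S : Fin k → Submodule F V)
    (hSdim : ∀ i, Module.finrank F (S i) = ℓ / 2)
    (h1 : ∀ i j : Fin k, i ≠ j → (S i).map (Φ j : V →ₗ[F] V) = S i)
    (h2 : ∀ i : Fin k, (S i).map (Φ i : V →ₗ[F] V) ⊓ S i = ⊥) :
    (k : ℝ) ≤ max (4 * (ℓ : ℝ)) (8 * Real.logb 2 ℓ) := by
  have hcompl : ∀ i, IsCompl (S i) ((S i).map (Φ i : V →ₗ[F] V)) := fun i =>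
    (Submodule.isCompl_iff_disjoint _ _ (by rw [LinearEquiv.finrank_map_eq, hSdim, hdim]; grind)).mpr
      (disjoint_iff.mpr (by rw [inf_comm, h2 i]))
  have : Nontrivial V := nontrivial_of_finrank_pos (R := F) (by omega)
  have hchain := Submodule.pow_mul_finrank_iInf_compatibleMaps_le h1 hcompl Finset.univ
  have hpos := Submodule.finrank_iInf_compatibleMaps_pos S Finset.univ
  rw [Finset.card_univ, Fintype.card_fin, finrank_linearMap, hdim] at hchain
  have h2k : 2 ^ k ≤ ℓ ^ 8 := by
    rw [show ℓ ^ 8 = (ℓ * ℓ) ^ 4 by ring]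
    exact two_pow_le_pow_four_of_four_pow_le (le_of_mul_le_of_one_le_left hchain hpos)
  have hk : (k : ℝ) ≤ Real.logb 2 ((ℓ : ℝ) ^ 8) := by
    rw [Real.le_logb_iff_rpow_le one_lt_two (by positivity), Real.rpow_natCast]
    exact_mod_cast h2k
  rw [Real.logb_pow] at hk
  exact le_max_of_le_right (by exact_mod_cast hk)
end

section
/- Suppose Φ_1, …, Φ_k and S_1, …, S_k satisfy the (r = 2) subspace conditions. Then for every n ≥ 1 and every choice of n distinct indices i_1, …, i_n in {1,…,k}, the dimension of the sum of the corresponding subspaces satisfies dim_F(S_{i_1} + S_{i_2} + … + S_{i_n}) ≥ (1 − 2^{−n})·ℓ. -/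
/-!
Let `W` be the sum of some of the `Sᵢ` and let `Φ = Φⱼ` for an index `j` not among them, so that
`Φ W = W`. The intersection `A = W ∩ Sⱼ` and its image `Φ A` both lie in `W` and meet trivially,
because `Sⱼ ∩ Φ Sⱼ = 0`; hence `dim A ≤ dim W / 2`, and adding `Sⱼ` to `W` gives
`dim (W + Sⱼ) = dim W + ℓ/2 - dim A ≥ dim W / 2 + ℓ/2`.
Iterating from `W = 0` yields `dim ≥ (1 - 2⁻ⁿ) ℓ`.
-/

open Module

section

variable {F V : Type*} [Field F] [AddCommGroup V] [Module F V] [FiniteDimensional F V]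

theorem Submodule.two_mul_finrank_le_of_disjoint_map {φ : V ≃ₗ[F] V} {A W : Submodule F V}
    (hA : A ≤ W) (hφA : A.map (φ : V →ₗ[F] V) ≤ W) (hdisj : Disjoint A (A.map (φ : V →ₗ[F] V))) :
    2 * finrank F A ≤ finrank F W := by
  have hsum := Submodule.finrank_sup_add_finrank_inf_eq A (A.map (φ : V →ₗ[F] V))
  rw [hdisj.eq_bot, finrank_bot, add_zero, LinearEquiv.finrank_map_eq] at hsum
  calc 2 * finrank F A = finrank F ↥(A ⊔ A.map (φ : V →ₗ[F] V)) := by omega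
    _ ≤ finrank F W := Submodule.finrank_mono (sup_le hA hφA)

theorem Submodule.finrank_add_two_mul_le_two_mul_finrank_sup {φ : V ≃ₗ[F] V}
    {W S : Submodule F V} (hW : W.map (φ : V →ₗ[F] V) ≤ W)
    (hS : Disjoint S (S.map (φ : V →ₗ[F] V))) :
    finrank F W + 2 * finrank F S ≤ 2 * finrank F ↥(W ⊔ S) := by
  have hA : 2 * finrank F ↥(W ⊓ S) ≤ finrank F W :=
    two_mul_finrank_le_of_disjoint_map inf_le_left
      ((Submodule.map_mono inf_le_left).trans hW)
      (hS.mono inf_le_right (Submodule.map_mono inf_le_right))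
  have := Submodule.finrank_sup_add_finrank_inf_eq W S
  omega

theorem Submodule.one_sub_half_pow_mul_le_finrank_biSup {ι : Type*} [DecidableEq ι]
    (Φ : ι → V ≃ₗ[F] V) (S : ι → Submodule F V) {d : ℕ} (hSdim : ∀ i, finrank F (S i) = d)
    (hinv : ∀ i j, i ≠ j → (S i).map (Φ j : V →ₗ[F] V) ≤ S i)
    (hdisj : ∀ i, Disjoint (S i) ((S i).map (Φ i : V →ₗ[F] V))) (s : Finset ι) :
    (1 - (1 / 2 : ℝ) ^ s.card) * (2 * d) ≤ finrank F ↥(⨆ i ∈ s, S i) := by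
  induction s using Finset.induction_on with
  | empty => simp
  | insert j s hj ih =>
    have hW : (⨆ i ∈ s, S i).map (Φ j : V →ₗ[F] V) ≤ ⨆ i ∈ s, S i := by
      rw [Submodule.map_le_iff_le_comap]
      refine iSup₂_le fun i hi => Submodule.map_le_iff_le_comap.mp ?_
      exact (hinv i j (ne_of_mem_of_not_mem hi hj)).trans (le_biSup S hi)
    have hstep : (finrank F ↥(⨆ i ∈ s, S i) : ℝ) + 2 * d
        ≤ 2 * finrank F ↥((⨆ i ∈ s, S i) ⊔ S j) := by
      have := finrank_add_two_mul_le_two_mul_finrank_sup hW (hdisj j)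
      rw [hSdim] at this
      exact_mod_cast this
    rw [Finset.iSup_insert, sup_comm, Finset.card_insert_of_notMem hj, pow_succ]
    nlinarith

end

theorem stmt6_general (F : Type*) [Field F] (V : Type*) [AddCommGroup V] [Module F V]
    [FiniteDimensional F V] (ℓ : ℕ) (hℓeven : Even ℓ)
    (k : ℕ) (Φ : Fin k → V ≃ₗ[F] V) (S : Fin k → Submodule F V)
    (hSdim : ∀ i, Module.finrank F (S i) = ℓ / 2)
    (h1 : ∀ i j : Fin k, i ≠ j → (S i).map (Φ j : V →ₗ[F] V) = S i)
    (h2 : ∀ i : Fin k, (S i).map (Φ i : V →ₗ[F] V) ⊓ S i = ⊥)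
    (n : ℕ) (idx : Fin n → Fin k) (hinj : Function.Injective idx) :
    (1 - (1 / 2 : ℝ) ^ n) * ℓ ≤ (Module.finrank F ↥(⨆ j : Fin n, S (idx j)) : ℝ) := by
  have hbound := Submodule.one_sub_half_pow_mul_le_finrank_biSup Φ S hSdim
    (fun i j hij => (h1 i j hij).le) (fun i => (disjoint_iff.mpr (h2 i)).symm)
    (Finset.univ.image idx)
  have hℓ : ((2 * (ℓ / 2) : ℕ) : ℝ) = ℓ := by rw [Nat.two_mul_div_two_of_even hℓeven]
  rw [Finset.card_image_of_injective _ hinj, Finset.card_univ, Fintype.card_fin,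
    Finset.iSup_finset_image] at hbound
  have hsup : ⨆ j ∈ Finset.univ, S (idx j) = ⨆ j, S (idx j) := by simp
  push_cast at hℓ
  rwa [hsup, hℓ] at hbound

/-- Under the (r = 2) subspace conditions, for every `n ≥ 1` and every
choice of `n` distinct indices `i₁, …, iₙ ∈ {1,…,k}`,
`dim (S_{i₁} + … + S_{iₙ}) ≥ (1 − 2⁻ⁿ)·ℓ`. -/
theorem stmt6 (F : Type*) [Field F] (V : Type*) [AddCommGroup V] [Module F V]
    [FiniteDimensional F V] (ℓ : ℕ) (hℓeven : Even ℓ) (hℓpos : 0 < ℓ)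
    (hdim : Module.finrank F V = ℓ)
    (k : ℕ) (Φ : Fin k → V ≃ₗ[F] V) (S : Fin k → Submodule F V)
    (hSdim : ∀ i, Module.finrank F (S i) = ℓ / 2)
    (h1 : ∀ i j : Fin k, i ≠ j → (S i).map (Φ j : V →ₗ[F] V) = S i)
    (h2 : ∀ i : Fin k, (S i).map (Φ i : V →ₗ[F] V) ⊓ S i = ⊥)
    (n : ℕ) (hn : 1 ≤ n) (idx : Fin n → Fin k) (hinj : Function.Injective idx) :
    (1 - (1 / 2 : ℝ) ^ n) * ℓ ≤ (Module.finrank F ↥(⨆ j : Fin n, S (idx j)) : ℝ) :=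
  stmt6_general F V ℓ hℓeven k Φ S hSdim h1 h2 n idx hinj
end

section
/- Let V be a finite-dimensional vector space over a field F, let Φ be an invertible linear endomorphism of V, let S be a subspace of V with Φ(S) ⊆ S, and let W be a subspace of V with Φ(W) ∩ W = {0}. Then 2·dim_F(S ∩ W) ≤ dim_F(S). -/
/-! An invariant subspace `S` contains both `U = S ∩ W` and its image `Φ(U)`. These two
subspaces meet trivially because `Φ(W) ∩ W = 0`, and `Φ(U)` has the same dimension as `U`,
so `S` contains a direct sum of two copies of `U`. -/

open Module

theorem Submodule.finrank_add_finrank_le_of_disjoint_of_le {K V : Type*} [DivisionRing K]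
    [AddCommGroup V] [Module K V] {s t u : Submodule K V} [FiniteDimensional K u]
    (hst : Disjoint s t) (hs : s ≤ u) (ht : t ≤ u) :
    finrank K s + finrank K t ≤ finrank K u := by
  have : FiniteDimensional K s := Submodule.finiteDimensional_of_le hs
  have : FiniteDimensional K t := Submodule.finiteDimensional_of_le ht
  rw [← finrank_sup_add_finrank_inf_eq s t, hst.eq_bot, finrank_bot, add_zero]
  exact Submodule.finrank_mono (sup_le hs ht)

/-- If `Φ` is an invertible endomorphism of a finite-dimensional vector
space `V`, `S` a subspace with `Φ(S) ⊆ S`, and `W` a subspace with `Φ(W) ∩ W = {0}`,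
then `2·dim (S ∩ W) ≤ dim S`. -/
theorem stmt7 (F : Type*) [Field F] (V : Type*) [AddCommGroup V] [Module F V]
    [FiniteDimensional F V] (Φ : V ≃ₗ[F] V) (S W : Submodule F V)
    (hS : S.map (Φ : V →ₗ[F] V) ≤ S)
    (hW : W.map (Φ : V →ₗ[F] V) ⊓ W = ⊥) :
    2 * Module.finrank F ↥(S ⊓ W) ≤ Module.finrank F ↥S := by
  set U := S ⊓ W
  have hdisj : Disjoint (U.map (Φ : V →ₗ[F] V)) U := by
    rw [disjoint_iff, ← le_bot_iff, ← hW]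
    exact inf_le_inf (Submodule.map_mono inf_le_right) inf_le_right
  calc 2 * finrank F U = finrank F (U.map (Φ : V →ₗ[F] V)) + finrank F U := by
        rw [LinearEquiv.finrank_map_eq, two_mul]
    _ ≤ finrank F S :=
        Submodule.finrank_add_finrank_le_of_disjoint_of_le hdisj
          ((Submodule.map_mono inf_le_left).trans hS) inf_le_left
end

section
/- Suppose Φ_1, …, Φ_k and S_1, …, S_k satisfy the (r = 2) subspace conditions. If n is a positive integer with 2^n > ℓ (in particular n = log₂ℓ + 1 when ℓ is a power of 2), then for every choice of n distinct indices i_1, …, i_n in {1,…,k}, the sum S_{i_1} + S_{i_2} + … + S_{i_n} equals all of V. -/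
/-!
If `T` is `Φ`-invariant and `S ⊓ Φ(S) = 0`, then `W = T ⊓ S` satisfies `W ⊓ Φ(W) = 0` with
`W ⊕ Φ(W) ≤ T`, so `2 dim (T ⊓ S) ≤ dim T`. Since `dim S = dim V / 2`, the dimension formula
turns this into `codim (T + S) ≤ codim T / 2`. Adding the `S_i` one at a time, each new summand
preserves the previous sum (condition (i)), so `n` distinct summands cut the codimension down
by a factor `2ⁿ > dim V`, i.e. to zero.
-/

section

open Module Submodule

variable {F V : Type*} [Field F] [AddCommGroup V] [Module F V] [FiniteDimensional F V]

theorem two_mul_finrank_inf_le_of_map_le {T S : Submodule F V} (f : V ≃ₗ[F] V)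
    (hT : T.map (f : V →ₗ[F] V) ≤ T) (hS : S.map (f : V →ₗ[F] V) ⊓ S = ⊥) :
    2 * finrank F ↥(T ⊓ S) ≤ finrank F T := by
  set W := T ⊓ S
  have hWS : W ⊓ W.map (f : V →ₗ[F] V) ≤ S.map (f : V →ₗ[F] V) ⊓ S :=
    le_inf (inf_le_right.trans (map_mono inf_le_right)) (inf_le_left.trans inf_le_right)
  have hdisj : W ⊓ W.map (f : V →ₗ[F] V) = ⊥ := le_bot_iff.mp (hS ▸ hWS)
  have hle : W ⊔ W.map (f : V →ₗ[F] V) ≤ T := sup_le inf_le_left ((map_mono inf_le_left).trans hT)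
  have hsum := finrank_sup_add_finrank_inf_eq W (W.map (f : V →ₗ[F] V))
  rw [hdisj, finrank_bot, LinearEquiv.finrank_map_eq] at hsum
  have := finrank_mono hle
  omega

theorem two_mul_finrank_quotient_sup_le {T S : Submodule F V} (f : V ≃ₗ[F] V)
    (hT : T.map (f : V →ₗ[F] V) ≤ T) (hS : S.map (f : V →ₗ[F] V) ⊓ S = ⊥)
    (hSdim : finrank F V ≤ 2 * finrank F S) :
    2 * finrank F (V ⧸ T ⊔ S) ≤ finrank F (V ⧸ T) := by
  have hinf := two_mul_finrank_inf_le_of_map_le f hT hS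
  have hsum := finrank_sup_add_finrank_inf_eq T S
  have hT' := finrank_quotient_add_finrank T
  have hTS := finrank_quotient_add_finrank (T ⊔ S)
  omega

theorem two_pow_card_mul_finrank_quotient_le {ι : Type*} (Φ : ι → V ≃ₗ[F] V)
    (S : ι → Submodule F V) (hSdim : ∀ i, finrank F V ≤ 2 * finrank F (S i))
    (hinv : ∀ i j, i ≠ j → (S i).map (Φ j : V →ₗ[F] V) ≤ S i)
    (hdisj : ∀ i, (S i).map (Φ i : V →ₗ[F] V) ⊓ S i = ⊥) (t : Finset ι) :
    2 ^ t.card * finrank F (V ⧸ ⨆ i ∈ t, S i) ≤ finrank F V := by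
  classical
  induction t using Finset.induction_on with
  | empty =>
    rw [Finset.card_empty, pow_zero, one_mul]
    exact finrank_quotient_le _
  | @insert i t hi ih =>
    have hT : (⨆ j ∈ t, S j).map (Φ i : V →ₗ[F] V) ≤ ⨆ j ∈ t, S j :=
      map_le_iff_le_comap.mpr <| iSup₂_le fun j hj =>
        map_le_iff_le_comap.mp <| (hinv j i (ne_of_mem_of_not_mem hj hi)).trans (le_biSup S hj)
    have hstep := two_mul_finrank_quotient_sup_le (Φ i) hT (hdisj i) (hSdim i)
    rw [Finset.card_insert_of_notMem hi, Finset.iSup_insert, sup_comm, pow_succ, mul_assoc]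
    exact (Nat.mul_le_mul_left _ hstep).trans ih

theorem iSup_eq_top_of_finrank_lt_two_pow {ι : Type*} [Fintype ι] (Φ : ι → V ≃ₗ[F] V)
    (S : ι → Submodule F V) (hSdim : ∀ i, finrank F V ≤ 2 * finrank F (S i))
    (hinv : ∀ i j, i ≠ j → (S i).map (Φ j : V →ₗ[F] V) ≤ S i)
    (hdisj : ∀ i, (S i).map (Φ i : V →ₗ[F] V) ⊓ S i = ⊥)
    (hcard : finrank F V < 2 ^ Fintype.card ι) :
    ⨆ i, S i = ⊤ := by
  have h := two_pow_card_mul_finrank_quotient_le Φ S hSdim hinv hdisj Finset.univ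
  rw [Finset.card_univ, show ⨆ i ∈ Finset.univ, S i = ⨆ i, S i by simp] at h
  have hquot : finrank F (V ⧸ ⨆ i, S i) < 1 :=
    Nat.lt_of_mul_lt_mul_left (h.trans_lt (hcard.trans_eq (mul_one _).symm))
  apply eq_top_of_finrank_eq
  have := finrank_quotient_add_finrank (⨆ i, S i)
  omega

end

theorem stmt8_general (F : Type*) [Field F] (V : Type*) [AddCommGroup V] [Module F V]
    [FiniteDimensional F V] (ℓ : ℕ) (hℓeven : Even ℓ)
    (hdim : Module.finrank F V = ℓ)
    (k : ℕ) (Φ : Fin k → V ≃ₗ[F] V) (S : Fin k → Submodule F V)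
    (hSdim : ∀ i, Module.finrank F (S i) = ℓ / 2)
    (h1 : ∀ i j : Fin k, i ≠ j → (S i).map (Φ j : V →ₗ[F] V) = S i)
    (h2 : ∀ i : Fin k, (S i).map (Φ i : V →ₗ[F] V) ⊓ S i = ⊥)
    (n : ℕ) (hpow : ℓ < 2 ^ n)
    (idx : Fin n → Fin k) (hinj : Function.Injective idx) :
    (⨆ j : Fin n, S (idx j)) = ⊤ := by
  refine iSup_eq_top_of_finrank_lt_two_pow (Φ ∘ idx) (S ∘ idx) (fun j => ?_)
    (fun i j hij => (h1 _ _ (hinj.ne hij)).le) (fun i => h2 (idx i)) (by simpa [hdim] using hpow)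
  rw [hdim, Function.comp_apply, hSdim, Nat.mul_div_cancel' hℓeven.two_dvd]

/-- Under the (r = 2) subspace conditions, if `n ≥ 1` and `2ⁿ > ℓ`
(in particular `n = log₂ ℓ + 1` when `ℓ` is a power of 2), then for every choice of
`n` distinct indices `i₁, …, iₙ ∈ {1,…,k}`, the sum `S_{i₁} + … + S_{iₙ}` is all of `V`. -/
theorem stmt8 (F : Type*) [Field F] (V : Type*) [AddCommGroup V] [Module F V]
    [FiniteDimensional F V] (ℓ : ℕ) (hℓeven : Even ℓ) (hℓpos : 0 < ℓ)
    (hdim : Module.finrank F V = ℓ)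
    (k : ℕ) (Φ : Fin k → V ≃ₗ[F] V) (S : Fin k → Submodule F V)
    (hSdim : ∀ i, Module.finrank F (S i) = ℓ / 2)
    (h1 : ∀ i j : Fin k, i ≠ j → (S i).map (Φ j : V →ₗ[F] V) = S i)
    (h2 : ∀ i : Fin k, (S i).map (Φ i : V →ₗ[F] V) ⊓ S i = ⊥)
    (n : ℕ) (hn : 1 ≤ n) (hpow : ℓ < 2 ^ n)
    (idx : Fin n → Fin k) (hinj : Function.Injective idx) :
    (⨆ j : Fin n, S (idx j)) = ⊤ :=
  stmt8_general F V ℓ hℓeven hdim k Φ S hSdim h1 h2 n hpow idx hinj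
end

section
/- Let ℓ ≥ 2 and suppose Φ_1, …, Φ_k and S_1, …, S_k satisfy the (r = 2) subspace conditions. Let t = ⌊log₂ℓ⌋ + 1 and assume t divides k. Then 2^{k/t} ≤ ℓ², and hence k ≤ 2·(log₂ℓ)·(⌊log₂ℓ⌋ + 1) ≤ 2·(log₂ℓ)·(log₂ℓ + 1), where log₂ denotes the real base-2 logarithm. -/
/-!
Let `W_s ⊆ End(V)` be the space of endomorphisms leaving every `S_i`, `i ∈ s`, invariant, so
`dim W_∅ = ℓ²` and `id ∈ W_s` always. For `i ∉ s` the map `Φ_i` fixes each `S_j` with `j ∈ s`,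
so `W_s` is stable under composing with `Φ_i` on either side; together with `V = S_i ⊕ Φ_i(S_i)`
this forces `dim W_{s ∪ {i}} ≤ (3/4) dim W_s`. Hence `(4/3)^k ≤ ℓ²`, and when
`t = ⌊log₂ ℓ⌋ + 1 ≥ 3` we have `(4/3)^t ≥ 2`, giving `2^{k/t} ≤ ℓ²`; the case `ℓ = 2` is checked
directly. The logarithmic bounds follow by taking `log₂`.
-/

open Module Submodule

lemma Submodule.two_mul_finrank_le_of_map_le {F M : Type*} [Field F] [AddCommGroup M] [Module F M]
    [FiniteDimensional F M] {A B W : Submodule F M} (e : M ≃ₗ[F] M)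
    (hA : A ≤ W) (heA : A.map (e : M →ₗ[F] M) ≤ W) (hB : A ⊓ A.map (e : M →ₗ[F] M) ≤ B) :
    2 * finrank F A ≤ finrank F W + finrank F B := by
  have hsum := finrank_sup_add_finrank_inf_eq A (A.map (e : M →ₗ[F] M))
  rw [LinearEquiv.finrank_map_eq] at hsum
  have := finrank_mono (sup_le hA heA)
  have := finrank_mono hB
  omega

section Endomorphisms

variable {F V : Type*} [Field F] [AddCommGroup V] [Module F V]

lemma Submodule.comp_mem_compatibleMaps {S : Submodule F V} {f g : V →ₗ[F] V}
    (hf : f ∈ S.compatibleMaps S) (hg : g ∈ S.compatibleMaps S) :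
    f ∘ₗ g ∈ S.compatibleMaps S :=
  hg.trans (comap_mono hf)

lemma Submodule.mem_compatibleMaps_of_map_eq {S : Submodule F V} {φ : V ≃ₗ[F] V}
    (h : S.map (φ : V →ₗ[F] V) = S) :
    (φ : V →ₗ[F] V) ∈ S.compatibleMaps S ∧ (φ.symm : V →ₗ[F] V) ∈ S.compatibleMaps S := by
  refine ⟨map_le_iff_le_comap.mp h.le, ?_⟩
  show S ≤ S.comap (φ.symm : V →ₗ[F] V)
  rw [comap_equiv_eq_map_symm, LinearEquiv.symm_symm, h]

variable [FiniteDimensional F V]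

lemma Submodule.isCompl_map_of_inf_eq_bot (S : Submodule F V) (φ : V ≃ₗ[F] V)
    (hdim : finrank F V ≤ 2 * finrank F S) (h : S.map (φ : V →ₗ[F] V) ⊓ S = ⊥) :
    IsCompl S (S.map (φ : V →ₗ[F] V)) := by
  refine (isCompl_iff_disjoint _ _ ?_).mpr (disjoint_iff.mpr h).symm
  rw [LinearEquiv.finrank_map_eq]
  omega

/-- Write `W' = W ∩ {T | T(S) ⊆ S}` and `U ⊆ W'` for the maps killing `S`. Left composition with `φ`
sends `W'` into `W` and meets `W'` only inside `U`, since `φ(S) ∩ S = 0`; right composition with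
`φ⁻¹` sends `U` into `W` and meets `U` only in `0`, since `S + φ(S) = V`. Hence
`2 dim W' ≤ dim W + dim U` and `2 dim U ≤ dim W`. -/
theorem Submodule.four_mul_finrank_inf_compatibleMaps_le_s9 (W : Submodule F (V →ₗ[F] V))
    (S : Submodule F V) (φ : V ≃ₗ[F] V) (hS : IsCompl S (S.map (φ : V →ₗ[F] V)))
    (hleft : ∀ T ∈ W, (φ : V →ₗ[F] V) ∘ₗ T ∈ W)
    (hright : ∀ T ∈ W, T ∘ₗ (φ.symm : V →ₗ[F] V) ∈ W) :
    4 * finrank F ↥(W ⊓ S.compatibleMaps S) ≤ 3 * finrank F W := by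
  set W' := W ⊓ S.compatibleMaps S
  set U := W' ⊓ S.compatibleMaps ⊥
  have hW' : 2 * finrank F W' ≤ finrank F W + finrank F U := by
    refine two_mul_finrank_le_of_map_le (LinearEquiv.congrRight φ) inf_le_left ?_ ?_
    · rintro _ ⟨T, hT, rfl⟩
      exact hleft T hT.1
    · rintro _ ⟨hX, T, hT, rfl⟩
      refine ⟨hX, fun x hx => ?_⟩
      have hφS : φ (T x) ∈ S.map (φ : V →ₗ[F] V) := mem_map_of_mem (hT.2 hx)
      exact disjoint_def.mp hS.disjoint _ (hX.2 hx) hφS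
  have hU : 2 * finrank F U ≤ finrank F W + finrank F (⊥ : Submodule F (V →ₗ[F] V)) := by
    refine two_mul_finrank_le_of_map_le (LinearEquiv.congrLeft V F φ)
      (inf_le_left.trans inf_le_left) ?_ ?_
    · rintro _ ⟨T, hT, rfl⟩
      exact hright T hT.1.1
    · rintro _ ⟨hX, T, hT, rfl⟩
      have hφS : S.map (φ : V →ₗ[F] V) ≤ LinearMap.ker (LinearEquiv.congrLeft V F φ T) := by
        rintro _ ⟨x, hx, rfl⟩
        simpa [LinearEquiv.congrLeft_apply] using hT.2 hx
      have hker := sup_le (hX.2 : S ≤ LinearMap.ker _) hφS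
      rw [hS.sup_eq_top, top_le_iff, LinearMap.ker_eq_top] at hker
      exact (mem_bot F).mpr hker
  rw [finrank_bot] at hU
  omega

variable {ι : Type*} (Φ : ι → V ≃ₗ[F] V) (S : ι → Submodule F V)

theorem four_pow_card_mul_finrank_iInf_compatibleMaps_le
    (hinv : ∀ i j, i ≠ j → (S i).map (Φ j : V →ₗ[F] V) = S i)
    (hcompl : ∀ i, IsCompl (S i) ((S i).map (Φ i : V →ₗ[F] V))) (s : Finset ι) :
    4 ^ s.card * finrank F ↥(⨅ i ∈ s, (S i).compatibleMaps (S i)) ≤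
      3 ^ s.card * finrank F V ^ 2 := by
  classical
  induction s using Finset.induction_on with
  | empty =>
    simpa only [Finset.card_empty, pow_zero, one_mul, sq, ← finrank_linearMap] using finrank_le _
  | insert i s hi ih =>
    have hΦ : ∀ j ∈ s, (Φ i : V →ₗ[F] V) ∈ (S j).compatibleMaps (S j) ∧
        ((Φ i).symm : V →ₗ[F] V) ∈ (S j).compatibleMaps (S j) := fun j hj =>
      mem_compatibleMaps_of_map_eq (hinv j i (ne_of_mem_of_not_mem hj hi))
    have hstep := four_mul_finrank_inf_compatibleMaps_le_s9 (⨅ j ∈ s, (S j).compatibleMaps (S j))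
      (S i) (Φ i) (hcompl i)
      (fun T hT => by
        simp only [mem_iInf] at hT ⊢
        exact fun j hj => comp_mem_compatibleMaps (hΦ j hj).1 (hT j hj))
      (fun T hT => by
        simp only [mem_iInf] at hT ⊢
        exact fun j hj => comp_mem_compatibleMaps (hT j hj) (hΦ j hj).2)
    rw [Finset.iInf_insert, Finset.card_insert_of_notMem hi, inf_comm]
    calc 4 ^ (s.card + 1) * finrank F ↥((⨅ j ∈ s, (S j).compatibleMaps (S j)) ⊓
          (S i).compatibleMaps (S i))
        ≤ 4 ^ s.card * (3 * finrank F ↥(⨅ j ∈ s, (S j).compatibleMaps (S j))) := by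
          rw [pow_succ, mul_assoc]; gcongr
      _ ≤ 3 ^ (s.card + 1) * finrank F V ^ 2 := by
          rw [pow_succ]; nlinarith

theorem four_pow_card_le_three_pow_card_mul_finrank_sq [Fintype ι] [Nontrivial V]
    (hinv : ∀ i j, i ≠ j → (S i).map (Φ j : V →ₗ[F] V) = S i)
    (hcompl : ∀ i, IsCompl (S i) ((S i).map (Φ i : V →ₗ[F] V))) :
    4 ^ Fintype.card ι ≤ 3 ^ Fintype.card ι * finrank F V ^ 2 := by
  have hid : LinearMap.id ∈ ⨅ i ∈ Finset.univ, (S i).compatibleMaps (S i) := by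
    simp only [mem_iInf]
    exact fun i _ x hx => hx
  have hpos : 0 < finrank F ↥(⨅ i ∈ Finset.univ, (S i).compatibleMaps (S i)) :=
    Nat.pos_of_ne_zero fun h => one_ne_zero ((mem_bot F).mp (finrank_eq_zero.mp h ▸ hid))
  calc 4 ^ Fintype.card ι
      ≤ 4 ^ Fintype.card ι * finrank F ↥(⨅ i ∈ Finset.univ, (S i).compatibleMaps (S i)) :=
        Nat.le_mul_of_pos_right _ hpos
    _ ≤ 3 ^ Fintype.card ι * finrank F V ^ 2 :=
        four_pow_card_mul_finrank_iInf_compatibleMaps_le Φ S hinv hcompl Finset.univ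

end Endomorphisms

lemma two_mul_three_pow_le_four_pow {t : ℕ} (ht : 3 ≤ t) : 2 * 3 ^ t ≤ 4 ^ t := by
  obtain ⟨n, rfl⟩ := Nat.exists_eq_add_of_le' ht
  have := Nat.pow_le_pow_left (show 3 ≤ 4 by norm_num) n
  rw [pow_add, pow_add]
  omega

lemma le_two_of_sixteen_pow_le {m : ℕ} (h : 16 ^ m ≤ 9 ^ m * 4) : m ≤ 2 := by
  by_contra! hm
  obtain ⟨n, rfl⟩ := Nat.exists_eq_add_of_le' hm
  have := Nat.pow_le_pow_left (show 9 ≤ 16 by norm_num) n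
  have : 0 < 9 ^ n := by positivity
  rw [pow_add, pow_add] at h
  omega

lemma two_pow_le_sq_of_four_pow_le {ℓ m : ℕ} (hℓ2 : 2 ≤ ℓ) (hℓ : Even ℓ)
    (h : 4 ^ ((Nat.log 2 ℓ + 1) * m) ≤ 3 ^ ((Nat.log 2 ℓ + 1) * m) * ℓ ^ 2) :
    2 ^ m ≤ ℓ ^ 2 := by
  rcases (show ℓ = 2 ∨ 4 ≤ ℓ by obtain ⟨c, rfl⟩ := hℓ; omega) with rfl | hℓ4
  · rw [show Nat.log 2 2 = 1 by decide, pow_mul, pow_mul] at h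
    exact Nat.pow_le_pow_right two_pos (le_two_of_sixteen_pow_le h)
  · have ht : 3 ≤ Nat.log 2 ℓ + 1 := by
      have := Nat.le_log_of_pow_le one_lt_two (show 2 ^ 2 ≤ ℓ by omega)
      omega
    rw [pow_mul, pow_mul] at h
    have h' := (Nat.pow_le_pow_left (two_mul_three_pow_le_four_pow ht) m).trans h
    rw [mul_pow, mul_comm] at h'
    exact Nat.le_of_mul_le_mul_left h' (by positivity)

lemma natCast_le_two_mul_logb_of_two_pow_le_sq {m ℓ : ℕ} (h : 2 ^ m ≤ ℓ ^ 2) :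
    (m : ℝ) ≤ 2 * Real.logb 2 ℓ :=
  calc (m : ℝ) ≤ Nat.log 2 (ℓ ^ 2) := by exact_mod_cast Nat.le_log_of_pow_le one_lt_two h
    _ ≤ Real.logb 2 ↑(ℓ ^ 2) := by exact_mod_cast Real.natLog_le_logb _ _
    _ = 2 * Real.logb 2 ℓ := by push_cast; rw [Real.logb_pow]; norm_num

/-- Under the (r = 2) subspace conditions with `ℓ ≥ 2`, if
`t = ⌊log₂ ℓ⌋ + 1` divides `k`, then `2^(k/t) ≤ ℓ²`, and hence
`k ≤ 2·(log₂ ℓ)·(⌊log₂ ℓ⌋ + 1) ≤ 2·(log₂ ℓ)·(log₂ ℓ + 1)` (real base-2 logarithm). -/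
theorem stmt9 (F : Type*) [Field F] (V : Type*) [AddCommGroup V] [Module F V]
    [FiniteDimensional F V] (ℓ : ℕ) (hℓ2 : 2 ≤ ℓ) (hℓeven : Even ℓ)
    (hdim : Module.finrank F V = ℓ)
    (k : ℕ) (Φ : Fin k → V ≃ₗ[F] V) (S : Fin k → Submodule F V)
    (hSdim : ∀ i, Module.finrank F (S i) = ℓ / 2)
    (h1 : ∀ i j : Fin k, i ≠ j → (S i).map (Φ j : V →ₗ[F] V) = S i)
    (h2 : ∀ i : Fin k, (S i).map (Φ i : V →ₗ[F] V) ⊓ S i = ⊥)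
    (hdvd : (Nat.log 2 ℓ + 1) ∣ k) :
    2 ^ (k / (Nat.log 2 ℓ + 1)) ≤ ℓ ^ 2 ∧
      (k : ℝ) ≤ 2 * Real.logb 2 ℓ * (Nat.log 2 ℓ + 1) ∧
      2 * Real.logb 2 ℓ * ((Nat.log 2 ℓ : ℝ) + 1) ≤
        2 * Real.logb 2 ℓ * (Real.logb 2 ℓ + 1) := by
  have : Nontrivial V := Module.nontrivial_of_finrank_pos (R := F) (by omega)
  have hcompl : ∀ i, IsCompl (S i) ((S i).map (Φ i : V →ₗ[F] V)) := fun i =>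
    (S i).isCompl_map_of_inf_eq_bot (Φ i)
      (by obtain ⟨c, rfl⟩ := hℓeven; rw [hSdim, hdim]; omega) (h2 i)
  have hk := four_pow_card_le_three_pow_card_mul_finrank_sq Φ S h1 hcompl
  rw [Fintype.card_fin, hdim, ← Nat.mul_div_cancel' hdvd] at hk
  have hpow := two_pow_le_sq_of_four_pow_le hℓ2 hℓeven hk
  have hlogb : 0 ≤ Real.logb 2 ℓ :=
    Real.logb_nonneg one_lt_two (by exact_mod_cast hℓ2.trans' one_le_two)
  refine ⟨hpow, ?_, ?_⟩
  · rw [← Nat.div_mul_cancel hdvd]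
    push_cast
    exact mul_le_mul_of_nonneg_right (natCast_le_two_mul_logb_of_two_pow_le_sq hpow)
      (by positivity)
  · gcongr
    exact Real.natLog_le_logb _ _
end

section
/- Suppose Φ_1, …, Φ_k and S_1, …, S_k satisfy the (r = 2) subspace conditions, and let O_1, …, O_t be a partition of {1,…,k} into t sets of equal size. Let Γ = {(i_1,…,i_t) ∈ O_1 × O_2 × … × O_t : S_{i_1} ∩ S_{i_2} ∩ … ∩ S_{i_t} ≠ {0}}. For each tuple v = (i_1,…,i_t) ∈ Γ let Π_v be the composition of Φ_{i_1}, Φ_{i_2}, …, Φ_{i_t} applied in that order (Φ_{i_1} first), i.e. the paper's product ∏_{j=1}^t Φ_{i_j}. Then the family {Π_v : v ∈ Γ} consists of |Γ| linearly independent endomorphisms of V. -/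
/-!
Induct on `t`, proving more generally that for every subspace `W` the maps `Π_v`, restricted to
`W`, are linearly independent over the tuples `v` with `S_{v₁} ∩ ⋯ ∩ S_{v_t} ∩ W ≠ 0`.
Split a relation `∑ c_v Π_v = 0` according to the last index `m` of `v`, and evaluate it at
`x ∈ W ∩ S_i` for a fixed `i ∈ O_t`: it becomes `∑_m Φ_m (B_m) = 0` with
`B_m = ∑_{v'} c_{v' m} Π_{v'} x`. The earlier indices of `v` avoid `O_t`, so every `Π_{v'}`
preserves `S_i` and all `B_m` lie in `S_i`; the `Φ_m` with `m ≠ i` preserve `S_i` as well, so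
`Φ_i (B_i) ∈ S_i ∩ Φ_i(S_i) = 0`. Hence `B_i = 0` on `W ∩ S_i`, and the induction hypothesis
for `W ∩ S_i` kills the coefficients `c_{v' i}`.
-/

open Finset Function

lemma iInf_comp_snoc {α β : Type*} [CompleteLattice α] {n : ℕ} (g : β → α)
    (v : Fin n → β) (m : β) :
    ⨅ j, g (Fin.snoc (α := fun _ => β) v m j) = (⨅ j, g (v j)) ⊓ g m := by
  refine le_antisymm (le_inf (le_iInf fun j => ?_) ?_) (le_iInf fun j => ?_)
  · simpa using iInf_le (fun j => g (Fin.snoc (α := fun _ => β) v m j)) j.castSucc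
  · simpa using iInf_le (fun j => g (Fin.snoc (α := fun _ => β) v m j)) (Fin.last n)
  · induction j using Fin.lastCases with
    | last => simp
    | cast j => simpa using inf_le_left.trans (iInf_le _ j)

lemma Fin.sum_univ_pi_eq_sum_snoc {M β : Type*} [AddCommMonoid M] [Fintype β] {n : ℕ}
    (f : (Fin (n + 1) → β) → M) :
    ∑ v, f v = ∑ m, ∑ v : Fin n → β, f (Fin.snoc v m) := by
  rw [← (Fin.snocEquiv fun _ => β).sum_comp, Fintype.sum_prod_type]
  rfl

section SubspaceConditions

variable {F V : Type*} [Field F] [AddCommGroup V] [Module F V] {k : ℕ}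
  (Φ : Fin k → V ≃ₗ[F] V)

/-- `Φ_{v (n-1)} ∘ ⋯ ∘ Φ_{v 0}`, the paper's row-vector product `∏ⱼ Φ_{v j}`. -/
noncomputable def phiProd {n : ℕ} (v : Fin n → Fin k) : Module.End F V :=
  (List.ofFn fun j => (Φ (v j) : V →ₗ[F] V)).reverse.prod

lemma phiProd_snoc {n : ℕ} (v : Fin n → Fin k) (m : Fin k) :
    phiProd Φ (Fin.snoc v m) = (Φ m : V →ₗ[F] V) * phiProd Φ v := by
  rw [phiProd, phiProd, List.ofFn_succ']
  simp

lemma mapsTo_phiProd {n : ℕ} {T : Submodule F V} {v : Fin n → Fin k}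
    (hv : ∀ j, Set.MapsTo (Φ (v j)) T T) : Set.MapsTo (phiProd Φ v) T T := by
  refine List.prod_induction (fun f : Module.End F V => Set.MapsTo f T T)
    (fun f g hf hg => hf.comp hg) (Set.mapsTo_id _) fun f hf => ?_
  obtain ⟨j, rfl⟩ := List.mem_ofFn.mp (List.mem_reverse.mp hf)
  exact hv j

variable {S : Fin k → Submodule F V}
  (hfix : ∀ i j : Fin k, i ≠ j → (S i).map (Φ j : V →ₗ[F] V) = S i)
  (hmove : ∀ i : Fin k, (S i).map (Φ i : V →ₗ[F] V) ⊓ S i = ⊥)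

include hfix in
lemma mapsTo_of_ne {i j : Fin k} (hij : i ≠ j) : Set.MapsTo (Φ j) (S i) (S i) := fun x hx => by
  rw [← hfix i j hij]
  exact Submodule.mem_map_of_mem hx

include hfix in
lemma sum_smul_phiProd_apply_mem {n : ℕ} {i : Fin k} {c : (Fin n → Fin k) → F}
    (hc : ∀ v, c v ≠ 0 → ∀ j, v j ≠ i) {x : V} (hx : x ∈ S i) :
    ∑ v, c v • phiProd Φ v x ∈ S i := by
  refine sum_mem fun v _ => ?_
  by_cases hv : c v = 0
  · simp [hv]
  · exact Submodule.smul_mem _ _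
      (mapsTo_phiProd Φ (fun j => mapsTo_of_ne Φ hfix (hc v hv j).symm) hx)

include hfix hmove in
lemma eq_zero_of_sum_apply_eq_zero {i : Fin k} {B : Fin k → V} (hB : ∀ m, B m ∈ S i)
    (hsum : ∑ m, Φ m (B m) = 0) : B i = 0 := by
  have hΦB : Φ i (B i) = -∑ m ∈ univ.erase i, Φ m (B m) :=
    eq_neg_of_add_eq_zero_right (by rwa [sum_erase_add _ _ (mem_univ i)])
  have hmem : Φ i (B i) ∈ S i := by
    rw [hΦB]
    exact neg_mem (sum_mem fun m hm => mapsTo_of_ne Φ hfix (ne_of_mem_erase hm).symm (hB m))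
  have hzero : Φ i (B i) ∈ (S i).map (Φ i : V →ₗ[F] V) ⊓ S i :=
    ⟨Submodule.mem_map_of_mem (hB i), hmem⟩
  rw [hmove i, Submodule.mem_bot] at hzero
  exact (Φ i).map_eq_zero_iff.mp hzero

include hfix hmove in
theorem eq_zero_of_forall_mem_sum_smul_phiProd_eq_zero :
    ∀ {n : ℕ} {O : Fin n → Finset (Fin k)}, Pairwise (Disjoint on O) →
      ∀ (W : Submodule F V) (c : (Fin n → Fin k) → F),
      (∀ v, c v ≠ 0 → (∀ j, v j ∈ O j) ∧ (⨅ j, S (v j)) ⊓ W ≠ ⊥) →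
      (∀ x ∈ W, ∑ v, c v • phiProd Φ v x = 0) → c = 0 := by
  intro n
  induction n with
  | zero =>
    intro O _ W c hc hsum
    funext v
    by_contra hv
    obtain ⟨x, hxW, hx⟩ := Submodule.exists_mem_ne_zero_of_ne_bot (by simpa using (hc v hv).2)
    have hsum := hsum x hxW
    rw [Fintype.sum_subsingleton _ v] at hsum
    exact hx ((smul_eq_zero.mp (by simpa [phiProd] using hsum)).resolve_left hv)
  | succ n ih =>
    intro O hO W c hc hsum
    suffices h : ∀ i v, c (Fin.snoc v i) = 0 by
      funext v
      simpa using h (v (Fin.last n)) (Fin.init v)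
    intro i
    by_cases hi : i ∈ O (Fin.last n)
    swap
    · exact fun v => by_contra fun hv => hi (by simpa using (hc _ hv).1 (Fin.last n))
    have hO' : Pairwise (Disjoint on fun j : Fin n => O j.castSucc) :=
      fun a b hab => hO (Fin.castSucc_injective n |>.ne hab)
    have hc' : ∀ v, c (Fin.snoc v i) ≠ 0 →
        (∀ j, v j ∈ O j.castSucc) ∧ (⨅ j, S (v j)) ⊓ (W ⊓ S i) ≠ ⊥ := fun v hv => by
      obtain ⟨hvO, hvW⟩ := hc _ hv
      refine ⟨fun j => by simpa using hvO j.castSucc, ?_⟩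
      rwa [iInf_comp_snoc, inf_right_comm, inf_assoc] at hvW
    refine congrFun (ih hO' (W ⊓ S i) _ hc' fun x ⟨hxW, hxS⟩ => ?_)
    refine eq_zero_of_sum_apply_eq_zero Φ hfix hmove
      (B := fun m => ∑ v, c (Fin.snoc v m) • phiProd Φ v x) (fun m => ?_) ?_
    · refine sum_smul_phiProd_apply_mem Φ hfix (fun v hv j hij => ?_) hxS
      have hvj : v j ∈ O j.castSucc := by simpa using (hc _ hv).1 j.castSucc
      exact disjoint_left.mp (hO (Fin.castSucc_lt_last j).ne) hvj (hij ▸ hi)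
    · simpa [Fin.sum_univ_pi_eq_sum_snoc, phiProd_snoc, map_sum] using hsum x hxW

include hfix hmove in
theorem linearIndepOn_phiProd {n : ℕ} {O : Fin n → Finset (Fin k)}
    (hO : Pairwise (Disjoint on O)) :
    LinearIndepOn F (phiProd Φ) {v | (∀ j, v j ∈ O j) ∧ (⨅ j, S (v j)) ≠ ⊥} := by
  rw [linearIndepOn_iff]
  intro l hl hzero
  ext v
  refine congrFun (eq_zero_of_forall_mem_sum_smul_phiProd_eq_zero Φ hfix hmove hO ⊤ l
    (fun v hv => ?_) fun x _ => ?_) v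
  · simpa using not_imp_comm.mp ((Finsupp.mem_supported' F l).mp hl v) hv
  · simpa [Finsupp.linearCombination_apply, Finsupp.sum_fintype] using
      LinearMap.congr_fun hzero x

end SubspaceConditions

theorem stmt10_general (F : Type*) [Field F] (V : Type*) [AddCommGroup V] [Module F V]
    (k : ℕ) (Φ : Fin k → V ≃ₗ[F] V) (S : Fin k → Submodule F V)
    (h1 : ∀ i j : Fin k, i ≠ j → (S i).map (Φ j : V →ₗ[F] V) = S i)
    (h2 : ∀ i : Fin k, (S i).map (Φ i : V →ₗ[F] V) ⊓ S i = ⊥)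
    (t : ℕ) (O : Fin t → Finset (Fin k))
    (hdisj : ∀ i j : Fin t, i ≠ j → Disjoint (O i) (O j))
    (Pi : (Fin t → Fin k) → Module.End F V)
    (hPi : ∀ v : Fin t → Fin k,
      Pi v = (List.ofFn (fun j : Fin t => ((Φ (v j) : V →ₗ[F] V)))).reverse.prod) :
    LinearIndependent F
      (fun v : {v : Fin t → Fin k // (∀ j, v j ∈ O j) ∧ (⨅ j : Fin t, S (v j)) ≠ ⊥} =>
        Pi v.val) := by
  obtain rfl : Pi = phiProd Φ := funext hPi
  exact linearIndepOn_phiProd Φ h1 h2 fun i j => hdisj i j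

/-- Under the (r = 2) subspace conditions, let `O₁, …, O_t` be a
partition of `{1,…,k}` into `t` sets of equal size, and let
`Γ = {(i₁,…,i_t) ∈ O₁ × ⋯ × O_t : S_{i₁} ∩ ⋯ ∩ S_{i_t} ≠ {0}}`. Then the compositions
`Π_v = Φ_{i₁} ∘ … first, …, Φ_{i_t} last` for `v ∈ Γ` are `|Γ|` linearly independent
endomorphisms of `V`. -/
theorem stmt10 (F : Type*) [Field F] (V : Type*) [AddCommGroup V] [Module F V]
    [FiniteDimensional F V] (ℓ : ℕ) (hℓeven : Even ℓ) (hℓpos : 0 < ℓ)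
    (hdim : Module.finrank F V = ℓ)
    (k : ℕ) (Φ : Fin k → V ≃ₗ[F] V) (S : Fin k → Submodule F V)
    (hSdim : ∀ i, Module.finrank F (S i) = ℓ / 2)
    (h1 : ∀ i j : Fin k, i ≠ j → (S i).map (Φ j : V →ₗ[F] V) = S i)
    (h2 : ∀ i : Fin k, (S i).map (Φ i : V →ₗ[F] V) ⊓ S i = ⊥)
    (t : ℕ) (ht : 1 ≤ t) (O : Fin t → Finset (Fin k))
    (hdisj : ∀ i j : Fin t, i ≠ j → Disjoint (O i) (O j))
    (hcover : ∀ x : Fin k, ∃ i : Fin t, x ∈ O i)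
    (hsize : ∀ i j : Fin t, (O i).card = (O j).card)
    (Pi : (Fin t → Fin k) → Module.End F V)
    (hPi : ∀ v : Fin t → Fin k,
      Pi v = (List.ofFn (fun j : Fin t => ((Φ (v j) : V →ₗ[F] V)))).reverse.prod) :
    LinearIndependent F
      (fun v : {v : Fin t → Fin k // (∀ j, v j ∈ O j) ∧ (⨅ j : Fin t, S (v j)) ≠ ⊥} =>
        Pi v.val) :=
  stmt10_general F V k Φ S h1 h2 t O hdisj Pi hPi
end

section
/- Suppose the endomorphisms A_{t,j} (t ∈ {1,…,r}, j ∈ {1,…,k}) and the subspaces S_1, …, S_k satisfy the r-parity subspace conditions. Then for every n ≥ 1 and every choice of n distinct indices i_1, …, i_n in {1,…,k}, dim_F(S_{i_1} + S_{i_2} + … + S_{i_n}) ≥ (1 − ((r−1)/r)^n)·ℓ. -/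
/-!
Let `W` be the sum of the subspaces already chosen and `S = S_i` the next one. Every `A_{t,i}`
fixes `W`, so the subspaces `W + A_{t,i}(S)` all have the dimension of `W + S`, and together they
span `V`. Codimension over `W` is subadditive, hence `ℓ - dim W ≤ r (dim (W + S) - dim W)`,
i.e. the codimension of `W + S` is at most `(r-1)/r` times that of `W`. Induction on the number
of subspaces gives codimension at most `((r-1)/r)ⁿ ℓ`.
-/

open Module Finset

namespace Submodule

variable {K V : Type*} [DivisionRing K] [AddCommGroup V] [Module K V] [FiniteDimensional K V]

theorem finrank_sup_finsetSup_add_card_mul_le {ι : Type*} (W : Submodule K V)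
    (X : ι → Submodule K V) (s : Finset ι) :
    finrank K ↥(W ⊔ s.sup X) + #s * finrank K W ≤ ∑ t ∈ s, finrank K ↥(W ⊔ X t) + finrank K W := by
  classical
  induction s using Finset.induction with
  | empty => rw [Finset.sup_empty, sup_bot_eq]; simp
  | insert a s ha ih =>
    have hsub := finrank_sup_add_finrank_inf_eq (W ⊔ X a) (W ⊔ s.sup X)
    have hinf : finrank K W ≤ finrank K ↥((W ⊔ X a) ⊓ (W ⊔ s.sup X)) :=
      finrank_mono (le_inf le_sup_left le_sup_left)
    rw [sup_insert, sum_insert ha, card_insert_of_notMem ha, sup_sup_distrib_left, add_one_mul]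
    omega

theorem finrank_add_card_mul_le_of_iSup_map_eq_top {ι : Type*} [Fintype ι] {W S : Submodule K V}
    (e : ι → V ≃ₗ[K] V) (hW : ∀ t, W.map (e t : V →ₗ[K] V) = W)
    (hS : ⨆ t, S.map (e t : V →ₗ[K] V) = ⊤) :
    finrank K V + Fintype.card ι * finrank K W ≤
      Fintype.card ι * finrank K ↥(W ⊔ S) + finrank K W := by
  have hrank : ∀ t, finrank K ↥(W ⊔ S.map (e t : V →ₗ[K] V)) = finrank K ↥(W ⊔ S) := fun t => by
    rw [← LinearEquiv.finrank_map_eq (e t) (W ⊔ S), map_sup, hW]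
  have := finrank_sup_finsetSup_add_card_mul_le W (fun t => S.map (e t : V →ₗ[K] V)) univ
  rwa [sup_univ_eq_iSup, hS, sup_top_eq, finrank_top, sum_congr rfl fun t _ => hrank t,
    sum_const, card_univ, smul_eq_mul] at this

theorem finrank_sub_finrank_sup_le {ι : Type*} [Fintype ι] [Nonempty ι] {W S : Submodule K V}
    (e : ι → V ≃ₗ[K] V) (hW : ∀ t, W.map (e t : V →ₗ[K] V) = W)
    (hS : ⨆ t, S.map (e t : V →ₗ[K] V) = ⊤) :
    (finrank K V - finrank K ↥(W ⊔ S) : ℝ) ≤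
      (Fintype.card ι - 1) / Fintype.card ι * (finrank K V - finrank K W) := by
  have hr : (0 : ℝ) < Fintype.card ι := by exact_mod_cast Fintype.card_pos
  have h : (finrank K V + Fintype.card ι * finrank K W : ℝ) ≤
      Fintype.card ι * finrank K ↥(W ⊔ S) + finrank K W := by
    exact_mod_cast finrank_add_card_mul_le_of_iSup_map_eq_top e hW hS
  rw [div_mul_eq_mul_div, le_div_iff₀ hr]
  linarith

theorem finrank_sub_finrank_finsetSup_le {ι κ : Type*} [Fintype ι] [Nonempty ι]
    (A : ι → κ → V ≃ₗ[K] V) (S : κ → Submodule K V)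
    (h1 : ∀ t i j, i ≠ j → (S i).map (A t j : V →ₗ[K] V) = S i)
    (h2 : ∀ i, ⨆ t, (S i).map (A t i : V →ₗ[K] V) = ⊤) (s : Finset κ) :
    (finrank K V - finrank K ↥(s.sup S) : ℝ) ≤
      ((Fintype.card ι - 1) / Fintype.card ι) ^ #s * finrank K V := by
  classical
  induction s using Finset.induction with
  | empty => simp
  | insert i s hi ih =>
    have hW : ∀ t, (s.sup S).map (A t i : V →ₗ[K] V) = s.sup S := fun t => by
      simp only [Finset.sup_eq_iSup, map_iSup]
      exact iSup_congr fun j => iSup_congr fun hj => h1 t j i (ne_of_mem_of_not_mem hj hi)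
    have hq : (0 : ℝ) ≤ (Fintype.card ι - 1) / Fintype.card ι :=
      div_nonneg (sub_nonneg.2 (by exact_mod_cast Fintype.card_pos)) (Nat.cast_nonneg _)
    rw [sup_insert, sup_comm, card_insert_of_notMem hi, pow_succ', mul_assoc]
    exact (finrank_sub_finrank_sup_le (fun t => A t i) hW (h2 i)).trans
      (mul_le_mul_of_nonneg_left ih hq)

end Submodule

theorem stmt11_general (F : Type*) [Field F] (V : Type*) [AddCommGroup V] [Module F V]
    [FiniteDimensional F V] (r : ℕ) (hr : 2 ≤ r) (ℓ : ℕ)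
    (hdim : Module.finrank F V = ℓ)
    (k : ℕ) (A : Fin r → Fin k → V ≃ₗ[F] V) (S : Fin k → Submodule F V)
    (h1 : ∀ (t : Fin r) (i j : Fin k), i ≠ j → (S i).map (A t j : V →ₗ[F] V) = S i)
    (h2 : ∀ i : Fin k, (⨆ t : Fin r, (S i).map (A t i : V →ₗ[F] V)) = ⊤)
    (n : ℕ) (idx : Fin n → Fin k) (hinj : Function.Injective idx) :
    (1 - (((r : ℝ) - 1) / r) ^ n) * ℓ ≤
      (Module.finrank F ↥(⨆ j : Fin n, S (idx j)) : ℝ) := by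
  have : NeZero r := ⟨by omega⟩
  have hsup : (⨆ j : Fin n, S (idx j)) = (univ.map ⟨idx, hinj⟩).sup S := by
    rw [sup_map, sup_univ_eq_iSup]
    rfl
  have h := Submodule.finrank_sub_finrank_finsetSup_le A S h1 h2 (univ.map ⟨idx, hinj⟩)
  rw [← hsup, card_map, card_univ, Fintype.card_fin, Fintype.card_fin, hdim] at h
  linarith

/-- Under the r-parity subspace conditions, for every `n ≥ 1` and every
choice of `n` distinct indices `i₁, …, iₙ ∈ {1,…,k}`,
`dim (S_{i₁} + … + S_{iₙ}) ≥ (1 − ((r−1)/r)ⁿ)·ℓ`. -/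
theorem stmt11 (F : Type*) [Field F] (V : Type*) [AddCommGroup V] [Module F V]
    [FiniteDimensional F V] (r : ℕ) (hr : 2 ≤ r) (ℓ : ℕ) (hℓpos : 0 < ℓ)
    (hrdvd : r ∣ ℓ) (hdim : Module.finrank F V = ℓ)
    (k : ℕ) (A : Fin r → Fin k → V ≃ₗ[F] V) (S : Fin k → Submodule F V)
    (hSdim : ∀ i, Module.finrank F (S i) = ℓ / r)
    (h1 : ∀ (t : Fin r) (i j : Fin k), i ≠ j → (S i).map (A t j : V →ₗ[F] V) = S i)
    (h2 : ∀ i : Fin k, (⨆ t : Fin r, (S i).map (A t i : V →ₗ[F] V)) = ⊤)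
    (n : ℕ) (hn : 1 ≤ n) (idx : Fin n → Fin k) (hinj : Function.Injective idx) :
    (1 - (((r : ℝ) - 1) / r) ^ n) * ℓ ≤
      (Module.finrank F ↥(⨆ j : Fin n, S (idx j)) : ℝ) :=
  stmt11_general F V r hr ℓ hdim k A S h1 h2 n idx hinj
end

section
/- Let V be a finite-dimensional vector space over a field F, let A_1, …, A_r be invertible linear endomorphisms of V, let S be a subspace of V with A_t(S) ⊆ S for every t in {1,…,r}, and let W be a subspace of V such that the family of subspaces A_1(W), A_2(W), …, A_r(W) is independent (their sum is a direct sum, i.e. each A_t(W) intersects the sum of the others only in {0}). Then r·dim_F(S ∩ W) ≤ dim_F(S). -/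
/-!
The images `A_t(S ∩ W)` all lie in `S`, since `S` is `A_t`-invariant, and they form an
independent family, being contained in the independent family `A_t(W)`. Each has the dimension
of `S ∩ W` because `A_t` is injective, and the dimensions of an independent family of subspaces
add up to the dimension of their sum.
-/

open Module

theorem iSupIndep.sum_finrank_eq_finrank_iSup {K V ι : Type*} [DivisionRing K] [AddCommGroup V]
    [Module K V] [Fintype ι] {p : ι → Submodule K V} [∀ i, FiniteDimensional K (p i)]
    (hp : iSupIndep p) : ∑ i, finrank K (p i) = finrank K ↥(⨆ i, p i) := by
  classical
  have hinj : Function.Injective (DirectSum.coeLinearMap p) := hp.dfinsupp_lsum_injective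
  rw [← finrank_directSum, ← LinearMap.finrank_range_of_inj hinj, DirectSum.range_coeLinearMap]

/-- If `A₁, …, A_r` are invertible endomorphisms of a finite-dimensional
vector space `V`, `S` a subspace with `A_t(S) ⊆ S` for every `t`, and `W` a subspace
such that the family `A₁(W), …, A_r(W)` is independent (each `A_t(W)` meets the sum of
the others only in `{0}`), then `r·dim (S ∩ W) ≤ dim S`. -/
theorem stmt12 (F : Type*) [Field F] (V : Type*) [AddCommGroup V] [Module F V]
    [FiniteDimensional F V] (r : ℕ) (A : Fin r → V ≃ₗ[F] V) (S W : Submodule F V)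
    (hS : ∀ t : Fin r, S.map (A t : V →ₗ[F] V) ≤ S)
    (hW : ∀ t : Fin r,
      (W.map (A t : V →ₗ[F] V)) ⊓
        (⨆ u : Fin r, ⨆ _ : u ≠ t, W.map (A u : V →ₗ[F] V)) = ⊥) :
    r * Module.finrank F ↥(S ⊓ W) ≤ Module.finrank F ↥S := by
  let T t := (S ⊓ W).map (A t : V →ₗ[F] V)
  have hT_indep : iSupIndep T :=
    iSupIndep.mono (fun t => disjoint_iff.mpr (hW t)) fun t => Submodule.map_mono inf_le_right
  have hT_le : ⨆ t, T t ≤ S := iSup_le fun t => (Submodule.map_mono inf_le_left).trans (hS t)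
  calc r * finrank F ↥(S ⊓ W)
      = ∑ t, finrank F (T t) := by simp [T, LinearEquiv.finrank_map_eq]
    _ = finrank F ↥(⨆ t, T t) := hT_indep.sum_finrank_eq_finrank_iSup
    _ ≤ finrank F S := Submodule.finrank_mono hT_le
end

section
/- Suppose the endomorphisms A_{t,j} (t ∈ {1,…,r}, j ∈ {1,…,k}) and the subspaces S_1, …, S_k satisfy the r-parity subspace conditions. If n is a positive integer with (r/(r−1))^n > ℓ (in particular n = ⌊log_δ ℓ⌋ + 1 with δ = r/(r−1)), then for every choice of n distinct indices i_1, …, i_n in {1,…,k}, the sum S_{i_1} + S_{i_2} + … + S_{i_n} equals all of V. -/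
/-!
Let `W` be the sum of the subspaces already chosen and `S` the next one. By the first condition
`W` is invariant under the `r` maps attached to `S`, so by the second condition `V ⧸ W` is
covered by the `r` images of `(W ⊔ S) ⧸ W`. Hence `codim W ≤ r (codim W - codim (W ⊔ S))`,
i.e. adding a subspace multiplies the codimension by at most `(r - 1) / r`. After `n` steps the
codimension is at most `((r - 1) / r)ⁿ ℓ < 1`.
-/

open Module Submodule

section

variable {F V : Type*} [Field F] [AddCommGroup V] [Module F V] [FiniteDimensional F V]

theorem Submodule.finrank_map_mkQ_add_finrank {W U : Submodule F V} (h : W ≤ U) :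
    finrank F (U.map W.mkQ) + finrank F W = finrank F U := by
  have := LinearMap.finrank_range_add_finrank_ker (W.mkQ.domRestrict U)
  rwa [LinearMap.range_domRestrict, LinearMap.ker_domRestrict, ker_mkQ,
    (comapSubtypeEquivOfLe h).finrank_eq] at this

theorem Submodule.finrank_le_sum_of_iSup_eq_top {ι : Type*} [Fintype ι] {p : ι → Submodule F V}
    (hp : ⨆ i, p i = ⊤) : finrank F V ≤ ∑ i, finrank F (p i) := by
  rw [← finrank_top F V, ← hp, ← Finset.sup_univ_eq_iSup]
  exact Finset.univ.apply_sup_le_sum (f := fun q : Submodule F V ↦ finrank F q) (finrank_bot F V)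
    (finrank_add_le_finrank_add_finrank _ _)

theorem card_mul_finrank_quotient_sup_le {ι : Type*} [Fintype ι] (B : ι → V ≃ₗ[F] V)
    {W T : Submodule F V} (hW : ∀ t, W.map (B t : V →ₗ[F] V) = W)
    (hT : ⨆ t, T.map (B t : V →ₗ[F] V) = ⊤) :
    Fintype.card ι * finrank F (V ⧸ W ⊔ T) ≤
      (Fintype.card ι - 1) * finrank F (V ⧸ W) := by
  set q : ι → Submodule F (V ⧸ W) := fun t ↦ ((W ⊔ T).map (B t : V →ₗ[F] V)).map W.mkQ
  have hmap : ∀ t, (W ⊔ T).map (B t : V →ₗ[F] V) = W ⊔ T.map (B t : V →ₗ[F] V) := fun t ↦ by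
    rw [Submodule.map_sup, hW t]
  have hcover : ⨆ t, q t = ⊤ := by
    rw [← Submodule.map_iSup, eq_top_iff, ← range_mkQ W, LinearMap.range_eq_map, ← hT]
    exact map_mono (iSup_mono fun t ↦ (hmap t).symm ▸ le_sup_right)
  have hq : ∀ t, finrank F (q t) = finrank F ↥(W ⊔ T) - finrank F W := fun t ↦
    Nat.eq_sub_of_add_eq <| by
      rw [finrank_map_mkQ_add_finrank ((hmap t).symm ▸ le_sup_left), LinearEquiv.finrank_map_eq]
  have hsum : finrank F (V ⧸ W) ≤ Fintype.card ι * (finrank F ↥(W ⊔ T) - finrank F W) := by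
    simpa [hq] using finrank_le_sum_of_iSup_eq_top hcover
  have hW := finrank_quotient_add_finrank W
  have hWT := finrank_quotient_add_finrank (W ⊔ T)
  have hle : finrank F W ≤ finrank F ↥(W ⊔ T) := finrank_mono le_sup_left
  have hsplit : finrank F (V ⧸ W) =
      finrank F (V ⧸ W ⊔ T) + (finrank F ↥(W ⊔ T) - finrank F W) := by
    omega
  rw [Nat.sub_one_mul, hsplit, mul_add]
  omega

theorem pow_card_mul_finrank_quotient_biSup_le {ι κ : Type*} [Fintype ι] [DecidableEq κ]
    (A : ι → κ → V ≃ₗ[F] V) (S : κ → Submodule F V)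
    (h1 : ∀ t i j, i ≠ j → (S i).map (A t j : V →ₗ[F] V) = S i)
    (h2 : ∀ i, ⨆ t, (S i).map (A t i : V →ₗ[F] V) = ⊤) (s : Finset κ) :
    Fintype.card ι ^ s.card * finrank F (V ⧸ ⨆ i ∈ s, S i) ≤
      (Fintype.card ι - 1) ^ s.card * finrank F V := by
  induction s using Finset.induction_on with
  | empty => simpa using finrank_quotient_le _
  | insert a s ha ih =>
    have hinv : ∀ t, (⨆ i ∈ s, S i).map (A t a : V →ₗ[F] V) = ⨆ i ∈ s, S i := fun t ↦ by
      simp only [Submodule.map_iSup]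
      exact biSup_congr fun i hi ↦ h1 t i a (ne_of_mem_of_not_mem hi ha)
    have hstep := card_mul_finrank_quotient_sup_le (A · a) hinv (h2 a)
    rw [Finset.iSup_insert, sup_comm, Finset.card_insert_of_notMem ha]
    calc Fintype.card ι ^ (s.card + 1) * finrank F (V ⧸ (⨆ i ∈ s, S i) ⊔ S a)
        ≤ Fintype.card ι ^ s.card * ((Fintype.card ι - 1) * finrank F (V ⧸ ⨆ i ∈ s, S i)) := by
          rw [pow_succ, mul_assoc]; gcongr
      _ ≤ (Fintype.card ι - 1) ^ (s.card + 1) * finrank F V := by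
          rw [mul_left_comm, pow_succ', mul_assoc]; gcongr

end

theorem stmt13_general (F : Type*) [Field F] (V : Type*) [AddCommGroup V] [Module F V]
    [FiniteDimensional F V] (r : ℕ) (hr : 2 ≤ r) (ℓ : ℕ)
    (hdim : Module.finrank F V = ℓ)
    (k : ℕ) (A : Fin r → Fin k → V ≃ₗ[F] V) (S : Fin k → Submodule F V)
    (h1 : ∀ (t : Fin r) (i j : Fin k), i ≠ j → (S i).map (A t j : V →ₗ[F] V) = S i)
    (h2 : ∀ i : Fin k, (⨆ t : Fin r, (S i).map (A t i : V →ₗ[F] V)) = ⊤)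
    (n : ℕ) (hpow : (ℓ : ℝ) < ((r : ℝ) / ((r : ℝ) - 1)) ^ n)
    (idx : Fin n → Fin k) (hinj : Function.Injective idx) :
    (⨆ j : Fin n, S (idx j)) = ⊤ := by
  have hcodim := pow_card_mul_finrank_quotient_biSup_le A S h1 h2 (Finset.univ.image idx)
  have hsup : ⨆ i ∈ Finset.univ.image idx, S i = ⨆ j, S (idx j) := by
    rw [Finset.iSup_finset_image]; simp
  rw [Finset.card_image_of_injective _ hinj, Finset.card_univ, Fintype.card_fin, Fintype.card_fin,
    hsup, hdim] at hcodim
  have hlt : (r - 1) ^ n * ℓ < r ^ n := by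
    have hcast : ((r - 1 : ℕ) : ℝ) = r - 1 := by rw [Nat.cast_sub (by omega), Nat.cast_one]
    have hpos : (0 : ℝ) < r - 1 := by rw [← hcast]; exact_mod_cast (by omega : 0 < r - 1)
    rw [div_pow, lt_div_iff₀ (pow_pos hpos n), ← hcast, mul_comm] at hpow
    exact_mod_cast hpow
  have hzero : finrank F (V ⧸ ⨆ j, S (idx j)) = 0 := by
    by_contra h
    exact (hcodim.trans_lt hlt).not_ge (Nat.le_mul_of_pos_right _ (Nat.pos_of_ne_zero h))
  rwa [finrank_zero_iff, Submodule.Quotient.subsingleton_iff] at hzero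

/-- Under the r-parity subspace conditions, if `n ≥ 1` and
`(r/(r−1))ⁿ > ℓ` (in particular `n = ⌊log_δ ℓ⌋ + 1` with `δ = r/(r−1)`), then for every
choice of `n` distinct indices `i₁, …, iₙ ∈ {1,…,k}`, the sum `S_{i₁} + … + S_{iₙ}`
is all of `V`. -/
theorem stmt13 (F : Type*) [Field F] (V : Type*) [AddCommGroup V] [Module F V]
    [FiniteDimensional F V] (r : ℕ) (hr : 2 ≤ r) (ℓ : ℕ) (hℓpos : 0 < ℓ)
    (hrdvd : r ∣ ℓ) (hdim : Module.finrank F V = ℓ)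
    (k : ℕ) (A : Fin r → Fin k → V ≃ₗ[F] V) (S : Fin k → Submodule F V)
    (hSdim : ∀ i, Module.finrank F (S i) = ℓ / r)
    (h1 : ∀ (t : Fin r) (i j : Fin k), i ≠ j → (S i).map (A t j : V →ₗ[F] V) = S i)
    (h2 : ∀ i : Fin k, (⨆ t : Fin r, (S i).map (A t i : V →ₗ[F] V)) = ⊤)
    (n : ℕ) (hn : 1 ≤ n) (hpow : (ℓ : ℝ) < ((r : ℝ) / ((r : ℝ) - 1)) ^ n)
    (idx : Fin n → Fin k) (hinj : Function.Injective idx) :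
    (⨆ j : Fin n, S (idx j)) = ⊤ :=
  stmt13_general F V r hr ℓ hdim k A S h1 h2 n hpow idx hinj
end

section
/- Let V be an ℓ-dimensional vector space over a field F with ℓ even, and let k ≥ 2. Let A_{1,j} and A_{2,j} (j ∈ {1,…,k}) be invertible linear endomorphisms of V, and let P_1, …, P_k and Q_1, …, Q_k be subspaces of V, each of dimension ℓ/2, such that A_{1,i}(P_j) = A_{2,i}(Q_j) for all distinct i, j in {1,…,k}, and A_{1,i}(P_i) ∩ A_{2,i}(Q_i) = {0} for all i in {1,…,k}. For i ∈ {1,…,k−1} define Θ_i as the composition applying A_{1,i} first, then A_{2,i}^{-1}, then A_{2,k}, then A_{1,k}^{-1} (the paper's product A_{1,i}A_{2,i}^{-1}A_{2,k}A_{1,k}^{-1} under the row-vector convention). Then for every i ∈ {1,…,k−1}: Θ_i(P_j) = P_j for all j ∉ {i, k}, and Θ_i(P_i) ∩ P_i = {0}. -/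
/-!
Write `φⱼ = A_{1,j} ≫ A_{2,j}⁻¹`, so that `Θᵢ = φᵢ ≫ φ_k⁻¹`. The hypotheses say that `φᵢ` sends
`P_j` to `Q_j` for `j ≠ i` and sends `P_i` to a subspace meeting `Q_i` trivially. Hence for
`j ∉ {i, k}` both `φᵢ` and `φ_k` send `P_j` to `Q_j`, so `Θᵢ` fixes `P_j`; and applying the
isomorphism `φ_k` to `Θᵢ(P_i) ∩ P_i` gives `φᵢ(P_i) ∩ Q_i = 0`.
-/

namespace Submodule

variable {R M N : Type*} [Semiring R] [AddCommMonoid M] [AddCommMonoid N] [Module R M]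
  [Module R N] (e f : M ≃ₗ[R] N) {S T : Submodule R M}

theorem map_trans_symm_eq_iff :
    S.map (e.trans f.symm : M →ₗ[R] M) = T ↔
      S.map (e : M →ₗ[R] N) = T.map (f : M →ₗ[R] N) := by
  rw [LinearEquiv.coe_trans, map_comp, map_symm_eq_iff, eq_comm]

theorem map_trans_symm_inf_eq_bot_iff :
    S.map (e.trans f.symm : M →ₗ[R] M) ⊓ T = ⊥ ↔
      S.map (e : M →ₗ[R] N) ⊓ T.map (f : M →ₗ[R] N) = ⊥ := by
  have hT : (T.map (f : M →ₗ[R] N)).map (f.symm : N →ₗ[R] M) = T := (map_symm_eq_iff f).2 rfl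
  rw [← (map_injective_of_injective f.symm.injective).eq_iff, map_bot,
    map_inf _ f.symm.injective, hT, LinearEquiv.coe_trans, map_comp]

end Submodule

open Submodule

theorem stmt15_general (F : Type*) [Field F] (V : Type*) [AddCommGroup V] [Module F V]
    (m : ℕ)
    (A1 A2 : Fin (m + 1) → V ≃ₗ[F] V) (P Q : Fin (m + 1) → Submodule F V)
    (h1 : ∀ i j : Fin (m + 1), i ≠ j →
      (P j).map (A1 i : V →ₗ[F] V) = (Q j).map (A2 i : V →ₗ[F] V))
    (h2 : ∀ i : Fin (m + 1),
      (P i).map (A1 i : V →ₗ[F] V) ⊓ (Q i).map (A2 i : V →ₗ[F] V) = ⊥)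
    (Θ : Fin m → V ≃ₗ[F] V)
    (hΘ : ∀ i : Fin m, Θ i =
      (((A1 i.castSucc).trans (A2 i.castSucc).symm).trans (A2 (Fin.last m))).trans
        (A1 (Fin.last m)).symm) :
    ∀ i : Fin m,
      (∀ j : Fin (m + 1), j ≠ i.castSucc → j ≠ Fin.last m →
        (P j).map (Θ i : V →ₗ[F] V) = P j) ∧
      (P i.castSucc).map (Θ i : V →ₗ[F] V) ⊓ P i.castSucc = ⊥ := by
  intro i
  set φ : Fin (m + 1) → V ≃ₗ[F] V := fun j ↦ (A1 j).trans (A2 j).symm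
  have hΘφ : Θ i = (φ i.castSucc).trans (φ (Fin.last m)).symm := by
    rw [hΘ]
    rfl
  have hφ : ∀ i j, i ≠ j → (P j).map (φ i : V →ₗ[F] V) = Q j :=
    fun i j hij ↦ (map_trans_symm_eq_iff _ _).2 (h1 i j hij)
  have hlast : i.castSucc ≠ Fin.last m := (Fin.castSucc_lt_last i).ne
  refine ⟨fun j hji hjl ↦ ?_, ?_⟩
  · rw [hΘφ, map_trans_symm_eq_iff, hφ _ _ hji.symm, hφ _ _ hjl.symm]
  · rw [hΘφ, map_trans_symm_inf_eq_bot_iff, hφ _ _ hlast.symm]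
    exact (map_trans_symm_inf_eq_bot_iff _ _).2 (h2 _)

/-- Let `V` be `ℓ`-dimensional (`ℓ` even) and consider `m + 1 ≥ 2` nodes.
Given invertible endomorphisms `A_{1,j}, A_{2,j}` and subspaces `P_j, Q_j` of dimension
`ℓ/2` with `A_{1,i}(P_j) = A_{2,i}(Q_j)` for `i ≠ j` and `A_{1,i}(P_i) ∩ A_{2,i}(Q_i) = {0}`,
define for each non-last node `i` the map `Θ_i = A_{1,i} A_{2,i}⁻¹ A_{2,last} A_{1,last}⁻¹`
(applied in that order, `A_{1,i}` first). Then `Θ_i(P_j) = P_j` for `j ∉ {i, last}`,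
and `Θ_i(P_i) ∩ P_i = {0}`. -/
theorem stmt15 (F : Type*) [Field F] (V : Type*) [AddCommGroup V] [Module F V]
    [FiniteDimensional F V] (ℓ : ℕ) (hℓeven : Even ℓ) (hℓpos : 0 < ℓ)
    (hdim : Module.finrank F V = ℓ)
    (m : ℕ) (hm : 1 ≤ m)
    (A1 A2 : Fin (m + 1) → V ≃ₗ[F] V) (P Q : Fin (m + 1) → Submodule F V)
    (hPdim : ∀ j, Module.finrank F (P j) = ℓ / 2)
    (hQdim : ∀ j, Module.finrank F (Q j) = ℓ / 2)
    (h1 : ∀ i j : Fin (m + 1), i ≠ j →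
      (P j).map (A1 i : V →ₗ[F] V) = (Q j).map (A2 i : V →ₗ[F] V))
    (h2 : ∀ i : Fin (m + 1),
      (P i).map (A1 i : V →ₗ[F] V) ⊓ (Q i).map (A2 i : V →ₗ[F] V) = ⊥)
    (Θ : Fin m → V ≃ₗ[F] V)
    (hΘ : ∀ i : Fin m, Θ i =
      (((A1 i.castSucc).trans (A2 i.castSucc).symm).trans (A2 (Fin.last m))).trans
        (A1 (Fin.last m)).symm) :
    ∀ i : Fin m,
      (∀ j : Fin (m + 1), j ≠ i.castSucc → j ≠ Fin.last m →
        (P j).map (Θ i : V →ₗ[F] V) = P j) ∧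
      (P i.castSucc).map (Θ i : V →ₗ[F] V) ⊓ P i.castSucc = ⊥ :=
  stmt15_general F V m A1 A2 P Q h1 h2 Θ hΘ
end
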